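/- arXiv:1005.2346 — 8 statements merged into one kernel-verified Lean document; each statement's English description precedes it below -/
import Mathlib

section
/- For an indeterminate z and positive integers n, a, b with b ≥ 1, the identity (n+a)·C(n-a+1, b) - n·z·C(n-a, b) = (1-z)·(b+1)·C(n-a, b+1) + (2-z)·(a+b)·C(n-a, b) + (2a+b-1)·C(n-a, b-1) holds, where C(·,·) denotes the binomial coefficient. -/
/-- Absorption identity over a commutative ring:
`(k+1)·C(m,k+1) = (m-k)·C(m,k)`. -/
lemma choose_absorb {R : Type*} [CommRing R] (m k : ℕ) :
    ((k : R) + 1) * (Nat.choose m (k + 1) : R) =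
      ((m : R) - k) * (Nat.choose m k : R) := by
  rcases le_or_gt k m with h | h
  · have := Nat.choose_succ_right_eq m k
    have hcast : ((Nat.choose m (k+1) * (k+1) : ℕ) : R) = ((Nat.choose m k * (m - k) : ℕ) : R) := by
      exact_mod_cast congrArg (Nat.cast (R := R)) this
    push_cast [Nat.cast_sub h] at hcast
    linear_combination hcast
  · rw [Nat.choose_eq_zero_of_lt h, Nat.choose_eq_zero_of_lt (Nat.lt_succ_of_lt h)]
    ring

/-- Binomial identity used in the Appendix Lemma: for `b ≥ 1` and `a ≤ n`,
`(n+a)·C(n-a+1,b) - n·z·C(n-a,b)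
  = (1-z)·(b+1)·C(n-a,b+1) + (2-z)·(a+b)·C(n-a,b) + (2a+b-1)·C(n-a,b-1)`,
as an identity in an arbitrary commutative ring (with `z` an indeterminate). -/
theorem binomial_identity {R : Type*} [CommRing R] (z : R) (n a b : ℕ)
    (hb : 1 ≤ b) (ha : a ≤ n) :
    ((n : R) + a) * (Nat.choose (n - a + 1) b : R) - (n : R) * z * (Nat.choose (n - a) b : R) =
      (1 - z) * ((b : R) + 1) * (Nat.choose (n - a) (b + 1) : R) +
        (2 - z) * ((a : R) + b) * (Nat.choose (n - a) b : R) +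
        (2 * (a : R) + b - 1) * (Nat.choose (n - a) (b - 1) : R) := by
  obtain ⟨c, rfl⟩ := Nat.exists_eq_add_of_le hb
  set m := n - a with hm
  have hn : (n : R) = (m : R) + a := by
    have : m + a = n := Nat.sub_add_cancel ha
    exact_mod_cast (congrArg (Nat.cast (R := R)) this.symm)
  have hp : (Nat.choose (m + 1) (1 + c) : R) =
      (Nat.choose m c : R) + (Nat.choose m (1 + c) : R) := by
    rw [add_comm 1 c, Nat.choose_succ_succ]
    push_cast
    ring
  have h1 := choose_absorb (R := R) m (c + 1)
  have h2 := choose_absorb (R := R) m c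
  have hb1 : 1 + c - 1 = c := by omega
  have hb2 : 1 + c + 1 = c + 2 := by omega
  rw [hb1, hb2, hn, hp]
  have e1 : (1 + c : ℕ) = c + 1 := by omega
  rw [e1]
  push_cast at h1 h2 ⊢
  linear_combination (z - 1) * h1 - h2
end

section
/- For any integer r ≥ 2 and variables x_1, ..., x_N (pairwise distinct), 2·∑_{i≠j} x_i^r/(x_i - x_j) = ∑_{i=1}^{r-2} p_i·p_{r-i-1} + (2N - r)·p_{r-1}, where p_k = ∑_{i=1}^N x_i^k is the k-th power sum. -/
open Finset

/-- Lemma 4.1: for pairwise distinct `x₁,…,x_N` and `r ≥ 2`,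
`2 ∑_{i≠j} xᵢʳ/(xᵢ-xⱼ) = ∑_{i=1}^{r-2} pᵢ p_{r-i-1} + (2N-r) p_{r-1}`. -/
theorem double_sum_power_identity {F : Type*} [Field F] {N : ℕ} (x : Fin N → F)
    (hx : Function.Injective x) (r : ℕ) (hr : 2 ≤ r) :
    2 * ∑ i : Fin N, ∑ j ∈ univ.filter (fun j => j ≠ i), x i ^ r / (x i - x j) =
      (∑ i ∈ Icc 1 (r - 2), (∑ m : Fin N, x m ^ i) * (∑ m : Fin N, x m ^ (r - i - 1))) +
        (2 * (N : F) - (r : F)) * ∑ m : Fin N, x m ^ (r - 1) := by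
  set p : ℕ → F := fun k => ∑ m : Fin N, x m ^ k with hp
  have hswap : ∀ g : Fin N → Fin N → F,
      ∑ i : Fin N, ∑ j ∈ univ.filter (fun j => j ≠ i), g i j =
      ∑ i : Fin N, ∑ j ∈ univ.filter (fun j => j ≠ i), g j i := by
    intro g
    rw [Finset.sum_comm' (t' := univ) (s' := fun j => univ.filter (fun i => i ≠ j))]
    intro i j
    simp [ne_comm]
  have two_mul_eq : 2 * ∑ i : Fin N, ∑ j ∈ univ.filter (fun j => j ≠ i), x i ^ r / (x i - x j)
      = ∑ i : Fin N, ∑ j ∈ univ.filter (fun j => j ≠ i), (x i ^ r - x j ^ r) / (x i - x j) := by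
    rw [two_mul]
    nth_rewrite 2 [hswap (fun i j => x i ^ r / (x i - x j))]
    rw [← Finset.sum_add_distrib]
    refine Finset.sum_congr rfl fun i _ => ?_
    rw [← Finset.sum_add_distrib]
    refine Finset.sum_congr rfl fun j hj => ?_
    rw [show x j - x i = -(x i - x j) by ring, div_neg, ← sub_eq_add_neg, div_sub_div_same]
  have geom : ∀ i j : Fin N, j ≠ i → (x i ^ r - x j ^ r) / (x i - x j)
      = ∑ k ∈ range r, x i ^ k * x j ^ (r - 1 - k) := by
    intro i j hij
    have hne : x i - x j ≠ 0 := sub_ne_zero.2 (hx.ne (Ne.symm hij))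
    rw [div_eq_iff hne]
    exact (geom_sum₂_mul (x i) (x j) r).symm
  have step3 : ∀ k m : ℕ, (∑ i : Fin N, ∑ j ∈ univ.filter (fun j => j ≠ i),
      x i ^ k * x j ^ m) = p k * p m - p (k + m) := by
    intro k m
    have hinner : ∀ i : Fin N, ∑ j ∈ univ.filter (fun j => j ≠ i), x j ^ m
        = p m - x i ^ m := by
      intro i
      rw [Finset.filter_ne', Finset.sum_erase_eq_sub (mem_univ i)]
    calc (∑ i : Fin N, ∑ j ∈ univ.filter (fun j => j ≠ i), x i ^ k * x j ^ m)
        = ∑ i : Fin N, (x i ^ k * p m - x i ^ (k + m)) := by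
          refine Finset.sum_congr rfl fun i _ => ?_
          rw [← Finset.mul_sum, hinner i, mul_sub, ← pow_add]
      _ = p k * p m - p (k + m) := by
          rw [Finset.sum_sub_distrib, ← Finset.sum_mul]
  have hp0 : p 0 = (N : F) := by simp [hp]
  rw [two_mul_eq]
  have key : (∑ i : Fin N, ∑ j ∈ univ.filter (fun j => j ≠ i),
      (x i ^ r - x j ^ r) / (x i - x j))
      = ∑ k ∈ range r, (p k * p (r - 1 - k) - p (r - 1)) := by
    rw [show (∑ i : Fin N, ∑ j ∈ univ.filter (fun j => j ≠ i),
        (x i ^ r - x j ^ r) / (x i - x j))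
        = ∑ i : Fin N, ∑ j ∈ univ.filter (fun j => j ≠ i),
          ∑ k ∈ range r, x i ^ k * x j ^ (r - 1 - k) from
      Finset.sum_congr rfl fun i _ => Finset.sum_congr rfl fun j hj =>
        geom i j (by simpa using hj)]
    rw [show (∑ i : Fin N, ∑ j ∈ univ.filter (fun j => j ≠ i),
        ∑ k ∈ range r, x i ^ k * x j ^ (r - 1 - k))
        = ∑ i : Fin N, ∑ k ∈ range r, ∑ j ∈ univ.filter (fun j => j ≠ i),
          x i ^ k * x j ^ (r - 1 - k) from
      Finset.sum_congr rfl fun i _ => Finset.sum_comm, Finset.sum_comm]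
    refine Finset.sum_congr rfl fun k hk => ?_
    rw [step3 k (r - 1 - k)]
    congr 2
    simp only [mem_range] at hk
    omega
  rw [key, Finset.sum_sub_distrib, Finset.sum_const, card_range, nsmul_eq_mul]
  have hset : range r = insert 0 (insert (r - 1) (Icc 1 (r - 2))) := by
    ext k
    simp only [mem_range, mem_insert, mem_Icc]
    omega
  rw [hset, Finset.sum_insert (by simp; omega), Finset.sum_insert (by simp; omega)]
  have h1 : r - 1 - (r - 1) = 0 := by omega
  have h2 : r - 1 - 0 = r - 1 := by omega
  rw [h1, h2, hp0]
  have hcongr : (∑ k ∈ Icc 1 (r - 2), p k * p (r - 1 - k))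
      = ∑ k ∈ Icc 1 (r - 2), p k * p (r - k - 1) := by
    refine Finset.sum_congr rfl fun k _ => ?_
    congr 2
    omega
  rw [hcongr]
  ring
end

section
/- The sequence of polynomials 𝒞(r) in the variable z defined by 𝒞(r) = ∑_{m=0}^{r} z^{r-m}·(1-z)^m·C(r+m, r-m)·(1/(m+1))·C(2m, m) satisfies 𝒞(1) = 1 and the recurrence 𝒞(r) = (1-z)·∑_{i=1}^{r-2} 𝒞(i)·𝒞(r-i-1) + (2-z)·𝒞(r-1) for all r ≥ 2. -/
open Finset Polynomial

/-- Upper-index Vandermonde: `∑_{k=0}^{N} C(k,p) C(N-k,q) = C(N+1, p+q+1)`. -/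
theorem upperVan (p : ℕ) : ∀ N q : ℕ,
    ∑ k ∈ range (N + 1), (k.choose p) * ((N - k).choose q) = (N + 1).choose (p + q + 1) := by
  intro N
  induction N with
  | zero =>
    intro q
    cases p <;> cases q <;> simp [Nat.choose]
  | succ N ih =>
    intro q
    rw [Finset.sum_range_succ]
    cases q with
    | zero =>
      have h : ∀ k ∈ range (N + 1), k.choose p * (N + 1 - k).choose 0 =
          k.choose p * (N - k).choose 0 := by intro k hk; simp
      rw [Finset.sum_congr rfl h, ih 0]
      simp [Nat.choose_succ_succ (N + 1) p]
      omega
    | succ q' =>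
      have h : ∀ k ∈ range (N + 1), k.choose p * (N + 1 - k).choose (q' + 1) =
          k.choose p * (N - k).choose q' + k.choose p * (N - k).choose (q' + 1) := by
        intro k hk
        simp only [mem_range] at hk
        have : N + 1 - k = (N - k) + 1 := by omega
        rw [this, Nat.choose_succ_succ, Nat.mul_add]
      rw [Finset.sum_congr rfl h, Finset.sum_add_distrib, ih q', ih (q' + 1)]
      have : (N + 1 + 1).choose (p + (q' + 1) + 1)
          = (N + 1).choose (p + q' + 1) + (N + 1).choose (p + (q' + 1) + 1) := by
        have := Nat.choose_succ_succ (N + 1) (p + q' + 1)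
        simpa [Nat.add_assoc, Nat.add_comm, Nat.add_left_comm] using this
      rw [this]
      simp [Nat.choose_zero_right]

theorem upperVan2 (n a b : ℕ) :
    ∑ i ∈ range (n + 1), ((i + a).choose (2 * a)) * ((n - i + b).choose (2 * b))
      = (n + a + b + 1).choose (2 * a + 2 * b + 1) := by
  have key := upperVan (2 * a) (n + a + b) (2 * b)
  have h1 : ∑ k ∈ Ico a (n + a + 1), (k.choose (2 * a)) * ((n + a + b - k).choose (2 * b))
      = ∑ k ∈ range (n + a + b + 1), (k.choose (2 * a)) * ((n + a + b - k).choose (2 * b)) := by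
    apply Finset.sum_subset
    · intro k hk
      simp only [mem_Ico, mem_range] at *
      omega
    · intro k hk hnk
      simp only [mem_Ico, mem_range] at hk hnk
      rcases lt_or_ge k a with h | h
      · have ha : 0 < a := by omega
        rw [Nat.choose_eq_zero_of_lt (show k < 2 * a by omega), Nat.zero_mul]
      · have hk2 : n + a + 1 ≤ k := by omega
        have hb : 0 < b := by omega
        rw [Nat.choose_eq_zero_of_lt (show n + a + b - k < 2 * b by omega), Nat.mul_zero]
  have h2 : ∑ k ∈ Ico a (n + a + 1), (k.choose (2 * a)) * ((n + a + b - k).choose (2 * b))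
      = ∑ i ∈ range (n + 1), ((a + i).choose (2 * a)) * ((n + a + b - (a + i)).choose (2 * b)) := by
    rw [Finset.sum_Ico_eq_sum_range]
    have h : n + a + 1 - a = n + 1 := by omega
    rw [h]
  have h3 : ∀ i ∈ range (n + 1),
      ((i + a).choose (2 * a)) * ((n - i + b).choose (2 * b))
        = ((a + i).choose (2 * a)) * ((n + a + b - (a + i)).choose (2 * b)) := by
    intro i hi
    simp only [mem_range] at hi
    congr 2 <;> omega
  rw [Finset.sum_congr rfl h3, ← h2, h1, key]

noncomputable def genCatalan (r : ℕ) : Polynomial ℚ :=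
  ∑ m ∈ Finset.range (r + 1),
    X ^ (r - m) * (1 - X) ^ m *
      Polynomial.C ((Nat.choose (r + m) (r - m) : ℚ) * (1 / ((m : ℚ) + 1)) *
        (Nat.choose (2 * m) m : ℚ))

/-- Scalar version of the generalized Catalan polynomial evaluated at `q`. -/
def cfun (q : ℚ) (r : ℕ) : ℚ :=
  ∑ m ∈ range (r + 1),
    q ^ (r - m) * (1 - q) ^ m * (((r + m).choose (2 * m) : ℚ) * (catalan m : ℚ))

lemma catalan_cast (m : ℕ) : (1 / ((m : ℚ) + 1)) * ((2 * m).choose m : ℚ) = (catalan m : ℚ) := by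
  have h := succ_mul_catalan_eq_centralBinom m
  have h2 : ((2 * m).choose m : ℚ) = ((m : ℚ) + 1) * (catalan m : ℚ) := by
    rw [← Nat.centralBinom_eq_two_mul_choose, ← h]
    push_cast
    ring
  rw [h2]
  have : ((m : ℚ) + 1) ≠ 0 := by positivity
  field_simp

lemma eval_genCatalan (q : ℚ) (r : ℕ) : (genCatalan r).eval q = cfun q r := by
  unfold genCatalan cfun
  rw [Polynomial.eval_finset_sum]
  apply Finset.sum_congr rfl
  intro m hm
  simp only [mem_range] at hm
  have hmr : m ≤ r := by omega
  have hsym : (r + m).choose (r - m) = (r + m).choose (2 * m) := by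
    rw [← Nat.choose_symm (by omega : 2 * m ≤ r + m)]
    congr 1
    omega
  simp only [eval_mul, eval_pow, eval_X, eval_sub, eval_one, eval_C]
  rw [hsym]
  have hc := catalan_cast m
  linear_combination (q ^ (r - m) * (1 - q) ^ m * (((r + m).choose (2 * m) : ℚ))) * hc

lemma cfun_zero (q : ℚ) : cfun q 0 = 1 := by
  simp [cfun]

lemma cfun_one (q : ℚ) : cfun q 1 = 1 := by
  simp [cfun, Finset.sum_range_succ, Nat.choose]

lemma genCatalan_zero : genCatalan 0 = 1 := by
  apply Polynomial.funext
  intro q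
  simp [eval_genCatalan, cfun_zero]

lemma genCatalan_one : genCatalan 1 = 1 := by
  apply Polynomial.funext
  intro q
  simp [eval_genCatalan, cfun_one]

/-- The key convolution identity. -/
lemma conv_eq (q : ℚ) (n : ℕ) :
    (1 - q) * (∑ i ∈ range (n + 1), cfun q i * cfun q (n - i))
      = ∑ m ∈ range (n + 1), q ^ (n - m) * (1 - q) ^ (m + 1) *
          (((n + m + 1).choose (2 * m + 1) : ℚ) * (catalan (m + 1) : ℚ)) := by
  -- Step 1: extend each inner sum to range (n+1)
  have hext : ∀ i ∈ range (n + 1), ∀ r : ℕ, r ≤ n →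
      cfun q r = ∑ a ∈ range (n + 1),
        q ^ (r - a) * (1 - q) ^ a * (((r + a).choose (2 * a) : ℚ) * (catalan a : ℚ)) := by
    intro i _ r hr
    unfold cfun
    apply Finset.sum_subset
    · intro a ha
      simp only [mem_range] at *
      omega
    · intro a ha hna
      simp only [mem_range] at ha hna
      rw [Nat.choose_eq_zero_of_lt (show r + a < 2 * a by omega)]
      push_cast
      ring
  -- Step 2: rewrite the double sum as a triple sum with uniform terms
  have h1 : ∑ i ∈ range (n + 1), cfun q i * cfun q (n - i)
      = ∑ a ∈ range (n + 1), ∑ b ∈ range (n + 1),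
          (q ^ (n - (a + b)) * (1 - q) ^ (a + b) * ((catalan a : ℚ) * (catalan b : ℚ))) *
            ((((n + a + b + 1).choose (2 * a + 2 * b + 1)) : ℕ) : ℚ) := by
    have h2 : ∀ i ∈ range (n + 1), cfun q i * cfun q (n - i)
        = ∑ a ∈ range (n + 1), ∑ b ∈ range (n + 1),
            (q ^ (n - (a + b)) * (1 - q) ^ (a + b) * ((catalan a : ℚ) * (catalan b : ℚ))) *
              (((i + a).choose (2 * a) : ℚ) * (((n - i) + b).choose (2 * b) : ℚ)) := by
      intro i hi
      simp only [mem_range] at hi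
      rw [hext i (by simp [mem_range]; omega) i (by omega),
          hext i (by simp [mem_range]; omega) (n - i) (by omega), Finset.sum_mul_sum]
      apply Finset.sum_congr rfl
      intro a ha
      apply Finset.sum_congr rfl
      intro b hb
      simp only [mem_range] at ha hb
      by_cases hai : a ≤ i
      · by_cases hbi : b ≤ n - i
        · have e2 : q ^ (i - a) * q ^ ((n - i) - b) = q ^ (n - (a + b)) := by
            rw [← pow_add]
            congr 1
            omega
          have e3 : (1 - q) ^ a * (1 - q) ^ b = (1 - q) ^ (a + b) := (pow_add _ _ _).symm
          calc q ^ (i - a) * (1 - q) ^ a * (((i + a).choose (2 * a) : ℚ) * (catalan a : ℚ)) *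
                (q ^ ((n - i) - b) * (1 - q) ^ b * ((((n - i) + b).choose (2 * b) : ℚ) * (catalan b : ℚ)))
              = (q ^ (i - a) * q ^ ((n - i) - b)) * ((1 - q) ^ a * (1 - q) ^ b) *
                ((catalan a : ℚ) * (catalan b : ℚ)) *
                (((i + a).choose (2 * a) : ℚ) * (((n - i) + b).choose (2 * b) : ℚ)) := by ring
            _ = _ := by rw [e2, e3]
        · rw [Nat.choose_eq_zero_of_lt (show (n - i) + b < 2 * b by omega)]
          push_cast
          ring
      · rw [Nat.choose_eq_zero_of_lt (show i + a < 2 * a by omega)]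
        push_cast
        ring
    rw [Finset.sum_congr rfl h2]
    -- swap the i-sum inside
    rw [Finset.sum_comm]
    apply Finset.sum_congr rfl
    intro a ha
    rw [Finset.sum_comm]
    apply Finset.sum_congr rfl
    intro b hb
    rw [← Finset.mul_sum]
    congr 1
    calc ∑ i ∈ range (n + 1), ((i + a).choose (2 * a) : ℚ) * ((n - i + b).choose (2 * b) : ℚ)
        = ((∑ i ∈ range (n + 1), (i + a).choose (2 * a) * ((n - i + b).choose (2 * b)) : ℕ) : ℚ) := by
          push_cast
          rfl
      _ = _ := by rw [upperVan2 n a b]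
  have hcat : ∀ s : ℕ, (catalan (s + 1) : ℚ)
      = ∑ a ∈ range (s + 1), (catalan a : ℚ) * (catalan (s - a) : ℚ) := by
    intro s
    have h : catalan (s + 1) = ∑ a ∈ range (s + 1), catalan a * catalan (s - a) := by
      rw [catalan_succ']
      exact Finset.Nat.sum_antidiagonal_eq_sum_range_succ (fun x y => catalan x * catalan y) s
    rw [h]
    push_cast
    rfl
  have hshrink : ∀ a ∈ range (n + 1),
      ∑ b ∈ range (n + 1),
        (q ^ (n - (a + b)) * (1 - q) ^ (a + b) * ((catalan a : ℚ) * (catalan b : ℚ))) *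
          ((((n + a + b + 1).choose (2 * a + 2 * b + 1)) : ℕ) : ℚ)
      = ∑ b ∈ range (n + 1 - a),
        (q ^ (n - (a + b)) * (1 - q) ^ (a + b) * ((catalan a : ℚ) * (catalan b : ℚ))) *
          ((((n + a + b + 1).choose (2 * a + 2 * b + 1)) : ℕ) : ℚ) := by
    intro a ha
    simp only [mem_range] at ha
    symm
    apply Finset.sum_subset
    · intro b hb
      simp only [mem_range] at *
      omega
    · intro b hb hnb
      simp only [mem_range] at hb hnb
      rw [Nat.choose_eq_zero_of_lt (show n + a + b + 1 < 2 * a + 2 * b + 1 by omega)]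
      push_cast
      ring
  have hgroup : ∑ a ∈ range (n + 1), ∑ b ∈ range (n + 1 - a),
        (q ^ (n - (a + b)) * (1 - q) ^ (a + b) * ((catalan a : ℚ) * (catalan b : ℚ))) *
          ((((n + a + b + 1).choose (2 * a + 2 * b + 1)) : ℕ) : ℚ)
      = ∑ s ∈ range (n + 1), ∑ a ∈ range (s + 1),
        (q ^ (n - (a + (s - a))) * (1 - q) ^ (a + (s - a)) *
            ((catalan a : ℚ) * (catalan (s - a) : ℚ))) *
          ((((n + a + (s - a) + 1).choose (2 * a + 2 * (s - a) + 1)) : ℕ) : ℚ) := by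
    rw [Finset.sum_sigma' (range (n + 1)) (fun a => range (n + 1 - a)),
        Finset.sum_sigma' (range (n + 1)) (fun s => range (s + 1))]
    apply Finset.sum_nbij' (i := fun p => (⟨p.1 + p.2, p.1⟩ : (_ : ℕ) × ℕ))
      (j := fun p => (⟨p.2, p.1 - p.2⟩ : (_ : ℕ) × ℕ))
    · intro p hp
      simp only [Finset.mem_sigma, mem_range] at *
      omega
    · intro p hp
      simp only [Finset.mem_sigma, mem_range] at *
      omega
    · intro p hp
      obtain ⟨a, b⟩ := p
      simp
    · intro p hp
      obtain ⟨s, a⟩ := p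
      simp only [Finset.mem_sigma, mem_range] at hp
      have h : a + (s - a) = s := by omega
      simp only [h]
    · intro p hp
      obtain ⟨a, b⟩ := p
      simp only [Finset.mem_sigma, mem_range] at hp
      have h : a + b - a = b := by omega
      simp only [h]
  rw [h1, Finset.sum_congr rfl hshrink, hgroup, Finset.mul_sum]
  apply Finset.sum_congr rfl
  intro s hs
  simp only [mem_range] at hs
  have hin : ∀ a ∈ range (s + 1),
      (q ^ (n - (a + (s - a))) * (1 - q) ^ (a + (s - a)) *
          ((catalan a : ℚ) * (catalan (s - a) : ℚ))) *
        ((((n + a + (s - a) + 1).choose (2 * a + 2 * (s - a) + 1)) : ℕ) : ℚ)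
      = (q ^ (n - s) * (1 - q) ^ s * (((n + s + 1).choose (2 * s + 1) : ℚ))) *
        ((catalan a : ℚ) * (catalan (s - a) : ℚ)) := by
    intro a ha
    simp only [mem_range] at ha
    have e1 : a + (s - a) = s := by omega
    have e2 : n + a + (s - a) + 1 = n + s + 1 := by omega
    have e3 : 2 * a + 2 * (s - a) + 1 = 2 * s + 1 := by omega
    rw [e1, e2, e3]
    ring
  rw [Finset.sum_congr rfl hin, ← Finset.mul_sum, ← hcat s]
  ring

lemma cfun_rec (q : ℚ) (n : ℕ) :
    cfun q (n + 1) = (1 - q) * (∑ i ∈ range (n + 1), cfun q i * cfun q (n - i)) + q * cfun q n := by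
  have h1 : cfun q (n + 1)
      = (∑ m ∈ range (n + 1), q ^ (n - m) * (1 - q) ^ (m + 1) *
          (((n + m + 2).choose (2 * m + 2) : ℚ) * (catalan (m + 1) : ℚ))) + q ^ (n + 1) := by
    unfold cfun
    rw [Finset.sum_range_succ']
    congr 1
    · apply Finset.sum_congr rfl
      intro m hm
      simp only [mem_range] at hm
      have e1 : n + 1 - (m + 1) = n - m := by omega
      have e2 : n + 1 + (m + 1) = n + m + 2 := by omega
      have e3 : 2 * (m + 1) = 2 * m + 2 := by omega
      rw [e1, e2, e3]
    · simp
  have h2 : q * cfun q n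
      = (∑ m ∈ range (n + 1), q ^ (n - m) * (1 - q) ^ (m + 1) *
          (((n + m + 1).choose (2 * m + 2) : ℚ) * (catalan (m + 1) : ℚ))) + q ^ (n + 1) := by
    unfold cfun
    rw [Finset.mul_sum, Finset.sum_range_succ']
    conv_rhs => rw [Finset.sum_range_succ]
    have hz : q ^ (n - n) * (1 - q) ^ (n + 1) *
        (((n + n + 1).choose (2 * n + 2) : ℚ) * (catalan (n + 1) : ℚ)) = 0 := by
      rw [Nat.choose_eq_zero_of_lt (show n + n + 1 < 2 * n + 2 by omega)]
      push_cast
      ring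
    rw [hz]
    have hmain : ∀ m ∈ range n,
        q * (q ^ (n - (m + 1)) * (1 - q) ^ (m + 1) *
          (((n + (m + 1)).choose (2 * (m + 1)) : ℚ) * (catalan (m + 1) : ℚ)))
        = q ^ (n - m) * (1 - q) ^ (m + 1) *
          (((n + m + 1).choose (2 * m + 2) : ℚ) * (catalan (m + 1) : ℚ)) := by
      intro m hm
      simp only [mem_range] at hm
      have e1 : q * q ^ (n - (m + 1)) = q ^ (n - m) := by
        rw [← pow_succ']
        congr 1
        omega
      have e2 : n + (m + 1) = n + m + 1 := by omega
      have e3 : 2 * (m + 1) = 2 * m + 2 := by omega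
      rw [e2, e3]
      linear_combination ((1 - q) ^ (m + 1) * (((n + m + 1).choose (2 * m + 2) : ℚ)) *
        ((catalan (m + 1) : ℚ))) * e1
    rw [Finset.sum_congr rfl hmain]
    have h0 : q * (q ^ (n - 0) * (1 - q) ^ 0 *
        (((n + 0).choose (2 * 0) : ℚ) * (catalan 0 : ℚ))) = q ^ (n + 1) := by
      simp [pow_succ, mul_comm]
    rw [h0]
    ring
  have h3 := conv_eq q n
  have hpascal : ∀ m ∈ range (n + 1),
      q ^ (n - m) * (1 - q) ^ (m + 1) *
          (((n + m + 2).choose (2 * m + 2) : ℚ) * (catalan (m + 1) : ℚ))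
      = q ^ (n - m) * (1 - q) ^ (m + 1) *
          (((n + m + 1).choose (2 * m + 1) : ℚ) * (catalan (m + 1) : ℚ))
        + q ^ (n - m) * (1 - q) ^ (m + 1) *
          (((n + m + 1).choose (2 * m + 2) : ℚ) * (catalan (m + 1) : ℚ)) := by
    intro m hm
    have hp : (n + m + 2).choose (2 * m + 2)
        = (n + m + 1).choose (2 * m + 1) + (n + m + 1).choose (2 * m + 2) :=
      Nat.choose_succ_succ (n + m + 1) (2 * m + 1)
    rw [hp]
    push_cast
    ring
  rw [h1, Finset.sum_congr rfl hpascal, Finset.sum_add_distrib, h3, h2]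
  ring


lemma genCatalan_rec (n : ℕ) :
    genCatalan (n + 1) =
      (1 - X) * (∑ i ∈ range (n + 1), genCatalan i * genCatalan (n - i)) + X * genCatalan n := by
  apply Polynomial.funext
  intro q
  simp only [eval_add, eval_mul, eval_sub, eval_one, eval_X, Polynomial.eval_finset_sum,
    eval_genCatalan]
  exact cfun_rec q n

/-- Proposition 8.3: `𝒞(1) = 1` and
`𝒞(r) = (1-z) ∑_{i=1}^{r-2} 𝒞(i) 𝒞(r-i-1) + (2-z) 𝒞(r-1)` for `r ≥ 2`. -/
theorem genCatalan_recurrence :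
    genCatalan 1 = 1 ∧
      ∀ r : ℕ, 2 ≤ r →
        genCatalan r =
          (1 - X) * ∑ i ∈ Icc 1 (r - 2), genCatalan i * genCatalan (r - i - 1) +
            (2 - X) * genCatalan (r - 1) := by
  refine ⟨genCatalan_one, ?_⟩
  intro r hr
  obtain ⟨n, rfl⟩ : ∃ n, r = n + 2 := ⟨r - 2, by omega⟩
  have e1 : n + 2 - 2 = n := by omega
  have e2 : n + 2 - 1 = n + 1 := by omega
  rw [e1, e2]
  have hIcc : ∑ i ∈ Icc 1 n, genCatalan i * genCatalan (n + 2 - i - 1)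
      = ∑ i ∈ range n, genCatalan (i + 1) * genCatalan (n + 1 - (i + 1)) := by
    rw [← Finset.Ico_add_one_right_eq_Icc, Finset.sum_Ico_eq_sum_range]
    apply Finset.sum_congr rfl
    intro i hi
    simp only [mem_range] at hi
    congr 2 <;> omega
  rw [hIcc]
  have hsplit : ∑ i ∈ range (n + 2), genCatalan i * genCatalan (n + 1 - i)
      = (∑ i ∈ range n, genCatalan (i + 1) * genCatalan (n + 1 - (i + 1)))
        + genCatalan (n + 1) + genCatalan (n + 1) := by
    rw [Finset.sum_range_succ', Finset.sum_range_succ]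
    have hlast : genCatalan (n + 1) * genCatalan (n + 1 - (n + 1)) = genCatalan (n + 1) := by
      rw [Nat.sub_self, genCatalan_zero, mul_one]
    have hzero : genCatalan 0 * genCatalan (n + 1 - 0) = genCatalan (n + 1) := by
      rw [Nat.sub_zero, genCatalan_zero, one_mul]
    rw [hlast, hzero]
  have hmain := genCatalan_rec (n + 1)
  rw [hsplit] at hmain
  rw [hmain]
  ring
end

section
/- For any partition λ of n, ∑_{(i,j)∈λ} (j-i)^k = ∑_{r=1}^{k} (S(k,r)/(r+1)) · ∑_{i=1}^{ℓ(λ)} ( falling(λ_i - i + 1, r+1) - falling(-i+1, r+1) ), where S(k,r) are Stirling numbers of the second kind and falling(x, p) = x(x-1)⋯(x-p+1) is the falling factorial. In particular, the content power sum p_k(A_λ) is a shifted symmetric function of λ. -/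
open Finset

lemma desc_step (r : ℕ) (x : ℚ) :
    (descPochhammer ℚ (r + 1)).eval (x + 1) - (descPochhammer ℚ (r + 1)).eval x =
      ((r : ℚ) + 1) * (descPochhammer ℚ r).eval x := by
  have h1 : (descPochhammer ℚ (r + 1)).eval (x + 1) =
      (x + 1) * (descPochhammer ℚ r).eval x := by
    rw [descPochhammer_succ_left]
    simp [Polynomial.eval_comp]
  rw [h1, descPochhammer_succ_eval]
  ring

/-- For a partition `λ` (with parts `λ 0 ≥ λ 1 ≥ …`, vanishing from index `l` on),
and `S` the Stirling numbers of the second kind (characterized by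
`x^k = ∑_{r=1}^k S(k,r)·(x)_r`), one has for `k ≥ 1`:
`∑_{(i,j)∈λ} (j-i)^k = ∑_{r=1}^{k} (S(k,r)/(r+1)) ∑_i ((λᵢ-i+1)_{r+1} - (-i+1)_{r+1})`.
Rows are 0-indexed here, so the content of cell in row `i`, column `j` is `j-(i+1)`,
`λᵢ - i + 1` becomes `λ i - i`, and `-i+1` becomes `-i`. -/
theorem content_power_sum_shifted_symmetric
    (S : ℕ → ℕ → ℚ)
    (hS : ∀ k : ℕ, 1 ≤ k → ∀ x : ℚ,
      x ^ k = ∑ r ∈ Icc 1 k, S k r * (descPochhammer ℚ r).eval x)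
    (l : ℕ) (lam : ℕ → ℕ) (hanti : Antitone lam) (hsupp : ∀ i, l ≤ i → lam i = 0)
    (k : ℕ) (hk : 1 ≤ k) :
    ∑ i ∈ range l, ∑ j ∈ Icc 1 (lam i), ((j : ℚ) - ((i : ℚ) + 1)) ^ k =
      ∑ r ∈ Icc 1 k, (S k r / ((r : ℚ) + 1)) *
        ∑ i ∈ range l,
          ((descPochhammer ℚ (r + 1)).eval ((lam i : ℚ) - (i : ℚ)) -
            (descPochhammer ℚ (r + 1)).eval (-(i : ℚ))) := by
  have key : ∀ (r i m : ℕ),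
      ∑ j ∈ Icc 1 m, (descPochhammer ℚ r).eval ((j : ℚ) - ((i : ℚ) + 1)) =
        ((descPochhammer ℚ (r + 1)).eval ((m : ℚ) - (i : ℚ)) -
          (descPochhammer ℚ (r + 1)).eval (-(i : ℚ))) / ((r : ℚ) + 1) := by
    intro r i m
    have hr : ((r : ℚ) + 1) ≠ 0 := by positivity
    rw [eq_div_iff hr]
    induction m with
    | zero => simp
    | succ m ih =>
      rw [Finset.sum_Icc_succ_top (by omega : 1 ≤ m + 1), add_mul, ih]
      have e1 : ((m : ℚ) + 1) - ((i : ℚ) + 1) = (m : ℚ) - i := by ring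
      have e2 : ((m : ℚ) + 1) - (i : ℚ) = ((m : ℚ) - i) + 1 := by ring
      push_cast
      rw [e1, e2]
      linarith [desc_step r ((m : ℚ) - i)]
  calc ∑ i ∈ range l, ∑ j ∈ Icc 1 (lam i), ((j : ℚ) - ((i : ℚ) + 1)) ^ k
      = ∑ i ∈ range l, ∑ j ∈ Icc 1 (lam i), ∑ r ∈ Icc 1 k,
          S k r * (descPochhammer ℚ r).eval ((j : ℚ) - ((i : ℚ) + 1)) := by
        refine Finset.sum_congr rfl fun i _ => Finset.sum_congr rfl fun j _ => ?_
        exact hS k hk _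
    _ = ∑ r ∈ Icc 1 k, ∑ i ∈ range l, S k r *
          ∑ j ∈ Icc 1 (lam i), (descPochhammer ℚ r).eval ((j : ℚ) - ((i : ℚ) + 1)) := by
        rw [Finset.sum_comm]
        refine Finset.sum_congr rfl fun i _ => ?_
        rw [Finset.sum_comm]
        exact Finset.sum_congr rfl fun r _ => (Finset.mul_sum _ _ _).symm
    _ = _ := by
        refine Finset.sum_congr rfl fun r _ => ?_
        rw [Finset.mul_sum]
        refine Finset.sum_congr rfl fun i _ => ?_
        rw [key r i (lam i)]
        ring
end

section
/- Let J_i = ∑_{j<i} (j i) ∈ ℂ[S_n] be the Jucys-Murphy elements. Then e_k(J_1, ..., J_n) = ∑_{μ ⊢ n, ℓ(μ) = n-k} C_μ, where e_k is the k-th elementary symmetric polynomial and C_μ is the formal sum of all permutations of cycle type μ in the group algebra ℂ[S_n]. -/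
/-!
Induct over initial segments `s` of the index set, proving that `e_k` of the `J_a`, `a ∈ s`, is
the sum of the permutations supported in `s` with `n - #cycles = k`. Adding a new largest index
`a` gives `e_{k+1}(s ∪ {a}) = e_{k+1}(s) + e_k(s) · J_a`. A permutation supported in `s ∪ {a}`
either fixes `a`, or factors uniquely as `τ · (j a)` with `τ` supported in `s` and `j = σ⁻¹ a ∈ s`;
multiplying by `(j a)` glues the fixed point `a` into the cycle of `j`, so it lowers the number of
cycles by exactly one. Hence `e_k(s) · J_a` is the sum of the permutations moving `a`.
-/

open Finset MonoidAlgebra Equiv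

noncomputable def JM (n : ℕ) (i : Fin n) : MonoidAlgebra ℂ (Equiv.Perm (Fin n)) :=
  ∑ j ∈ Finset.univ.filter (fun j => j < i),
    MonoidAlgebra.of ℂ (Equiv.Perm (Fin n)) (Equiv.swap j i)

namespace Equiv.Perm

variable {α : Type*} [Fintype α] [DecidableEq α]

/-- `Fintype.card α` minus the number of cycles of `σ`, fixed points included (`cycleType` omits
them). For `σ` of cycle type `μ ⊢ n`, `ℓ(μ) = n - σ.reflectionLength`. -/
def reflectionLength (σ : Perm α) : ℕ := σ.cycleType.sum - Multiset.card σ.cycleType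

theorem card_cycleType_mul_two_le_sum_cycleType (σ : Perm α) :
    Multiset.card σ.cycleType * 2 ≤ σ.cycleType.sum := by
  simpa using Multiset.card_nsmul_le_sum fun _ h => two_le_of_mem_cycleType h

theorem sum_cycleType_eq_card_add_iff {σ : Perm α} {k : ℕ} :
    σ.cycleType.sum = Multiset.card σ.cycleType + k ↔ σ.reflectionLength = k := by
  have := card_cycleType_mul_two_le_sum_cycleType σ
  unfold reflectionLength
  omega

theorem reflectionLength_eq_zero_iff {σ : Perm α} : σ.reflectionLength = 0 ↔ σ = 1 := by
  refine ⟨fun h => card_cycleType_eq_zero.mp ?_, fun h => by simp [h, reflectionLength]⟩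
  have := card_cycleType_mul_two_le_sum_cycleType σ
  rw [reflectionLength] at h
  omega

theorem IsCycle.reflectionLength {σ : Perm α} (hσ : σ.IsCycle) :
    σ.reflectionLength = #σ.support - 1 := by
  simp [Perm.reflectionLength, hσ.cycleType]

theorem Disjoint.reflectionLength_mul {σ τ : Perm α} (h : Disjoint σ τ) :
    (σ * τ).reflectionLength = σ.reflectionLength + τ.reflectionLength := by
  have := card_cycleType_mul_two_le_sum_cycleType σ
  have := card_cycleType_mul_two_le_sum_cycleType τ
  simp only [Perm.reflectionLength, h.cycleType_mul, Multiset.sum_add, Multiset.card_add]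
  omega

theorem IsCycle.reflectionLength_swap_mul {γ : Perm α} (hγ : γ.IsCycle) {x : α} (hx : γ x ≠ x) :
    (swap x (γ x) * γ).reflectionLength + 1 = γ.reflectionLength := by
  by_cases hγγ : γ (γ x) = x
  · rw [hγ.eq_swap_of_apply_apply_eq_self hx hγγ, swap_apply_left, swap_mul_self,
      (isCycle_swap hx.symm).reflectionLength, card_support_swap hx.symm]
    simp [Perm.reflectionLength]
  · rw [(hγ.swap_mul hx hγγ).reflectionLength, hγ.reflectionLength, support_swap_mul_eq γ x hγγ,
      card_sdiff_of_subset (by simpa using hx)]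
    have := hγ.two_le_card_support
    simp only [card_singleton]
    omega

theorem reflectionLength_swap_mul {f : Perm α} {x : α} (hx : f x ≠ x) :
    (swap x (f x) * f).reflectionLength + 1 = f.reflectionLength := by
  set γ := f.cycleOf x
  have hγ : γ ∈ f.cycleFactorsFinset :=
    cycleOf_mem_cycleFactorsFinset_iff.mpr (mem_support.mpr hx)
  have hγx : γ x = f x := cycleOf_apply_self f x
  have hdisj : Disjoint γ (f * γ⁻¹) := (disjoint_mul_inv_of_mem_cycleFactorsFinset hγ).symm
  have hf : f = γ * (f * γ⁻¹) := by rw [hdisj.commute.eq, inv_mul_cancel_right]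
  have hdisj' : Disjoint (swap x (γ x) * γ) (f * γ⁻¹) :=
    hdisj.mono (fun _ hy => (mem_support_swap_mul_imp_mem_support_ne hy).1) le_rfl
  have hsplit : swap x (γ x) * f = (swap x (γ x) * γ) * (f * γ⁻¹) := by rw [mul_assoc, ← hf]
  rw [← hγx, hsplit, hdisj'.reflectionLength_mul]
  conv_rhs => rw [hf, hdisj.reflectionLength_mul,
    ← (isCycle_cycleOf f hx).reflectionLength_swap_mul (hγx ▸ hx)]
  ring

theorem reflectionLength_mul_swap {τ : Perm α} {j a : α} (ha : τ a = a) (hj : j ≠ a) :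
    (τ * swap j a).reflectionLength = τ.reflectionLength + 1 := by
  have hτj : τ j ≠ a := fun h => hj (τ.injective (h.trans ha.symm))
  have hσ : τ * swap j a = swap (τ j) a * τ := by rw [mul_swap_eq_swap_mul, ha]
  have h := reflectionLength_swap_mul (f := swap (τ j) a * τ) (x := a) (by simpa [ha] using hτj)
  rw [mul_apply, ha, swap_apply_right, swap_comm, swap_mul_self_mul] at h
  rw [hσ, ← h]

theorem filter_reflectionLength_eq_zero (s : Finset α) :
    ({σ : Perm α | σ.support ⊆ s ∧ σ.reflectionLength = 0} : Finset (Perm α)) = {1} := by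
  ext σ
  simp only [mem_filter, mem_univ, true_and, mem_singleton, reflectionLength_eq_zero_iff]
  exact ⟨And.right, fun h => ⟨by simp [h], h⟩⟩

theorem support_mul_swap_subset (τ : Perm α) (j a : α) :
    (τ * swap j a).support ⊆ insert j (insert a τ.support) := fun x hx => by
  rcases mem_union.mp (support_mul_le τ (swap j a) hx) with hx | hx
  · exact mem_insert_of_mem (mem_insert_of_mem hx)
  · rcases (swap_apply_ne_self_iff.mp (mem_support.mp hx)).2 with rfl | rfl
    exacts [mem_insert_self _ _, mem_insert_of_mem (mem_insert_self _ _)]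

theorem sum_sum_mul_swap {M : Type*} [AddCommMonoid M] (f : Perm α → M) {s : Finset α} {a : α}
    (ha : a ∉ s) (k : ℕ) :
    ∑ τ ∈ ({τ : Perm α | τ.support ⊆ s ∧ τ.reflectionLength = k} : Finset (Perm α)),
        ∑ j ∈ s, f (τ * swap j a) =
      ∑ σ ∈ ({σ : Perm α | σ.support ⊆ insert a s ∧ σ a ≠ a ∧ σ.reflectionLength = k + 1} :
        Finset (Perm α)), f σ := by
  rw [← sum_product']
  refine sum_nbij' (fun p => p.1 * swap p.2 a) (fun σ => (σ * swap (σ⁻¹ a) a, σ⁻¹ a))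
    ?_ ?_ ?_ ?_ (fun _ _ => rfl)
  · rintro ⟨τ, j⟩ h
    simp only [mem_product, mem_filter, mem_univ, true_and] at h ⊢
    obtain ⟨⟨hτs, hτk⟩, hjs⟩ := h
    have hτa : τ a = a := notMem_support.mp fun h => ha (hτs h)
    have hja : j ≠ a := fun h => ha (h ▸ hjs)
    refine ⟨(support_mul_swap_subset τ j a).trans
        (insert_subset (mem_insert_of_mem hjs) (insert_subset_insert a hτs)), ?_,
      by rw [reflectionLength_mul_swap hτa hja, hτk]⟩
    simpa [hτa] using fun h => hja (τ.injective (h.trans hτa.symm))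
  · intro σ h
    simp only [mem_product, mem_filter, mem_univ, true_and] at h ⊢
    obtain ⟨hσs, hσa, hσk⟩ := h
    set j := σ⁻¹ a
    have hσj : σ j = a := σ.apply_symm_apply a
    have hja : j ≠ a := fun h => hσa (h ▸ hσj)
    have hjs : j ∈ s :=
      (mem_insert.mp (hσs (mem_support.mpr (hσj.trans_ne hja.symm)))).resolve_left hja
    have hτa : (σ * swap j a) a = a := by rw [mul_apply, swap_apply_right, hσj]
    refine ⟨⟨(subset_insert_iff_of_notMem (notMem_support.mpr hτa)).mp
        ((support_mul_swap_subset σ j a).trans (insert_subset (mem_insert_of_mem hjs)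
          (insert_subset (mem_insert_self a s) hσs))), ?_⟩, hjs⟩
    have := reflectionLength_mul_swap hτa hja
    rw [mul_swap_mul_self, hσk] at this
    omega
  · rintro ⟨τ, j⟩ h
    simp only [mem_product, mem_filter, mem_univ, true_and] at h
    have hτa : τ.symm a = a := τ.symm_apply_eq.mpr (notMem_support.mp fun h' => ha (h.1.1 h')).symm
    simp [hτa]
  · intro σ _
    simp

theorem sum_support_subset_insert {M : Type*} [AddCommMonoid M] (f : Perm α → M)
    {s : Finset α} {a : α} (ha : a ∉ s) (k : ℕ) :
    ∑ σ ∈ ({σ : Perm α | σ.support ⊆ insert a s ∧ σ.reflectionLength = k + 1} :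
        Finset (Perm α)), f σ =
      ∑ σ ∈ ({σ : Perm α | σ.support ⊆ s ∧ σ.reflectionLength = k + 1} : Finset (Perm α)),
          f σ +
        ∑ τ ∈ ({τ : Perm α | τ.support ⊆ s ∧ τ.reflectionLength = k} : Finset (Perm α)),
          ∑ j ∈ s, f (τ * swap j a) := by
  rw [sum_sum_mul_swap f ha, ← sum_filter_add_sum_filter_not _ (fun σ : Perm α => σ a = a),
    filter_filter, filter_filter]
  congr 2 <;> ext σ <;> simp only [mem_filter, mem_univ, true_and]
  · constructor
    · rintro ⟨⟨hσs, hσk⟩, hσa⟩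
      exact ⟨(subset_insert_iff_of_notMem (notMem_support.mpr hσa)).mp hσs, hσk⟩
    · rintro ⟨hσs, hσk⟩
      exact ⟨⟨hσs.trans (subset_insert _ _), hσk⟩, notMem_support.mp fun h => ha (hσs h)⟩
  · tauto

end Equiv.Perm

theorem Finset.sort_insert_of_forall_lt {α : Type*} [LinearOrder α] {s : Finset α} {a : α}
    (h : ∀ b ∈ s, b < a) : (insert a s).sort (· ≤ ·) = s.sort (· ≤ ·) ++ [a] := by
  have hsorted (t : Finset α) : (t.sort (· ≤ ·)).Pairwise (· < ·) :=
    List.sortedLT_iff_pairwise.mp (sortedLT_sort t)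
  refine List.Pairwise.eq_of_mem_iff (hsorted _) (List.pairwise_append.mpr
    ⟨hsorted s, by simp, fun b hb c hc => by simp_all⟩) ?_
  · simp [or_comm]

section JucysMurphy

open Equiv.Perm

variable (R : Type*) [Semiring R] {α : Type*} [Fintype α] [LinearOrder α]

noncomputable def jucysMurphy (a : α) : MonoidAlgebra R (Perm α) :=
  ∑ j ∈ univ.filter (fun j => j < a), of R (Perm α) (swap j a)

noncomputable def esymmJucysMurphy (s : Finset α) (k : ℕ) : MonoidAlgebra R (Perm α) :=
  ∑ u ∈ s.powersetCard k, ((u.sort (· ≤ ·)).map (jucysMurphy R)).prod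

variable {R}

theorem esymmJucysMurphy_zero (s : Finset α) : esymmJucysMurphy R s 0 = 1 := by
  simp [esymmJucysMurphy]

theorem esymmJucysMurphy_insert {s : Finset α} {a : α} (h : ∀ b ∈ s, b < a) (k : ℕ) :
    esymmJucysMurphy R (insert a s) (k + 1) =
      esymmJucysMurphy R s (k + 1) + esymmJucysMurphy R s k * jucysMurphy R a := by
  have ha : a ∉ s := fun ha => lt_irrefl a (h a ha)
  have hsub : ∀ u ∈ s.powersetCard k, a ∉ u := fun u hu hau => ha ((mem_powersetCard.mp hu).1 hau)
  rw [esymmJucysMurphy, powersetCard_succ_insert ha, sum_union, sum_image, esymmJucysMurphy,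
    esymmJucysMurphy, sum_mul]
  · congr 1
    refine sum_congr rfl fun u hu => ?_
    rw [sort_insert_of_forall_lt fun b hb => h b ((mem_powersetCard.mp hu).1 hb), List.map_append,
      List.prod_append, List.map_singleton, List.prod_singleton]
  · exact fun u hu v hv huv => by
      rw [← erase_insert (hsub u hu), huv, erase_insert (hsub v hv)]
  · refine disjoint_left.mpr fun u hu hu' => ?_
    obtain ⟨v, -, rfl⟩ := mem_image.mp hu'
    exact ha ((mem_powersetCard.mp hu).1 (mem_insert_self a v))

theorem jucysMurphy_eq_sum_of_isLowerSet {s : Finset α} {a : α}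
    (hs : IsLowerSet ((insert a s : Finset α) : Set α)) (h : ∀ b ∈ s, b < a) :
    jucysMurphy R a = ∑ j ∈ s, of R (Perm α) (swap j a) := by
  rw [jucysMurphy]
  congr 1
  ext j
  simp only [mem_filter, mem_univ, true_and]
  refine ⟨fun hj => ?_, h j⟩
  exact (mem_insert.mp (hs hj.le (mem_insert_self a s))).resolve_left hj.ne

theorem esymmJucysMurphy_eq_sum {s : Finset α} (hs : IsLowerSet (s : Set α)) (k : ℕ) :
    esymmJucysMurphy R s k =
      ∑ σ ∈ ({σ : Perm α | σ.support ⊆ s ∧ σ.reflectionLength = k} : Finset (Perm α)),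
        of R (Perm α) σ := by
  have hzero (t : Finset α) : esymmJucysMurphy R t 0 =
      ∑ σ ∈ ({σ : Perm α | σ.support ⊆ t ∧ σ.reflectionLength = 0} : Finset (Perm α)),
        of R (Perm α) σ := by
    rw [esymmJucysMurphy_zero, filter_reflectionLength_eq_zero, sum_singleton, map_one]
  induction s using Finset.induction_on_max generalizing k with
  | empty =>
    cases k with
    | zero => exact hzero ∅
    | succ k =>
      rw [esymmJucysMurphy, powersetCard_eq_empty.mpr (by simp), sum_empty]
      refine (sum_eq_zero fun σ hσ => ?_).symm
      simp only [mem_filter, mem_univ, true_and, subset_empty, support_eq_empty_iff] at hσ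
      obtain ⟨rfl, h⟩ := hσ
      simp [reflectionLength] at h
  | insert a t hlt ih =>
    have ha : a ∉ t := fun ha => lt_irrefl a (hlt a ha)
    have ht : IsLowerSet (t : Set α) := fun x y hyx hx =>
      (mem_insert.mp (hs hyx (mem_insert_of_mem hx))).resolve_left (hyx.trans_lt (hlt x hx)).ne
    cases k with
    | zero => exact hzero _
    | succ k =>
      rw [esymmJucysMurphy_insert hlt, ih ht, ih ht, jucysMurphy_eq_sum_of_isLowerSet hs hlt,
        sum_mul_sum, sum_support_subset_insert _ ha]
      simp only [map_mul]

end JucysMurphy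

/-- Jucys' theorem: `e_k(J₁,…,Jₙ)` is the sum of all permutations of `Fin n`
whose cycle type (including fixed points as parts `1`) has `n - k` parts.
Since Mathlib's `cycleType` records only the nontrivial cycles, a permutation
`σ` has `n - σ.cycleType.sum + σ.cycleType.card` parts in total, and the
condition `ℓ(μ) = n - k` reads `σ.cycleType.sum = σ.cycleType.card + k`.
The elementary symmetric function is expanded as the sum over `k`-subsets of
the (ordered) products of the commuting elements `Jᵢ`. -/
theorem jucys_esymm (n k : ℕ) :
    ∑ s ∈ Finset.univ.powersetCard k,
        ((s.sort (· ≤ ·)).map (JM n)).prod =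
      ∑ σ ∈ Finset.univ.filter
          (fun σ : Equiv.Perm (Fin n) => σ.cycleType.sum = σ.cycleType.card + k),
        MonoidAlgebra.of ℂ (Equiv.Perm (Fin n)) σ := by
  have h := esymmJucysMurphy_eq_sum (R := ℂ) (s := (univ : Finset (Fin n)))
    (by simpa using isLowerSet_univ) k
  simp only [subset_univ, true_and, ← Perm.sum_cycleType_eq_card_add_iff] at h
  exact h
end

section
/- For any partition λ of n, the transition probabilities c_i(λ) = H_λ / H_{λ^{(i)}} (taken to be 0 when λ^{(i)} is not a partition) satisfy ∑_{i=1}^{ℓ(λ)+1} c_i(λ) = 1, i.e. the transition measure ω_λ is a probability measure. -/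
open Finset

/-- Conjugate part `λ'_j` (number of rows of length `≥ j`), rows indexed in `range L`. -/
def conjPart (L : ℕ) (lam : ℕ → ℕ) (j : ℕ) : ℕ :=
  ((Finset.range L).filter (fun i => j ≤ lam i)).card

/-- Product of hook lengths `H_λ = ∏_{(i,j)∈λ} (λ_i + λ'_j - i - j + 1)`
(rows 0-indexed, so the hook of the cell in row `i`, column `j` is
`λ_i + λ'_j - i - j` with our conventions), as a rational number. -/
def hookProd (L : ℕ) (lam : ℕ → ℕ) : ℚ :=
  ∏ i ∈ Finset.range L, ∏ j ∈ Finset.Icc 1 (lam i),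
    ((lam i : ℚ) + (conjPart L lam j : ℚ) - (i : ℚ) - (j : ℚ))

open scoped Classical in
/-- Transition probability `cᵢ(λ) = H_λ / H_{λ^{(i)}}`, equal to `0` when adding a
box to row `i` does not produce a partition. -/
noncomputable def transProb (L : ℕ) (lam : ℕ → ℕ) (i : ℕ) : ℚ :=
  if Antitone (Function.update lam i (lam i + 1)) then
    hookProd L lam / hookProd L (Function.update lam i (lam i + 1))
  else 0

/-!
Write `β_i = λ_i + (l - i)` for the beta-numbers of `λ` viewed with `l + 1` rows, so that
`β_l = 0`. In row `i` the hook lengths together with the differences `β_i - β_k` (`k > i`) are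
exactly `1, …, β_i`, which gives Frobenius' form of the hook formula
`H_λ · ∏_{i<k} (β_i - β_k) = ∏_i β_i!`. Adding a box to row `i` replaces `β_i` by `β_i + 1`, so
`c_i = (β_i + 1)⁻¹ ∏_{k≠i} (β_i + 1 - β_k) / (β_i - β_k)`; this vanishes exactly when `λ^{(i)}` is
not a partition, since then `β_{i-1} = β_i + 1`. Because `β_l = 0`, the numerator
`(β_i + 1)⁻¹ ∏_{k≠i} (β_i + 1 - β_k)` is `Q(β_i)` for the monic polynomial
`Q = ∏_{k≠l} (X + 1 - β_k)` of degree `l`, and by Lagrange interpolation at the `l + 1` nodes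
`β_i` the sum of the `c_i` is the leading coefficient of `Q`.
-/

section Vandermonde

variable {K : Type*} [CommRing K] {ι : Type*} [LinearOrder ι]

def vandermondeProd (s : Finset ι) (x : ι → K) : K :=
  ∏ m ∈ s, ∏ k ∈ s with m < k, (x m - x k)

theorem vandermondeProd_eq_mul_erase {s : Finset ι} {i : ι} (hi : i ∈ s) (x : ι → K) :
    vandermondeProd s x =
      (-1) ^ #{m ∈ s | m < i} * (∏ k ∈ s.erase i, (x i - x k)) * vandermondeProd (s.erase i) x := by
  have hrow : ∀ m, ∏ k ∈ s with m < k, (x m - x k) =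
      (if m < i then x m - x i else 1) * ∏ k ∈ s.erase i with m < k, (x m - x k) := by
    intro m
    rw [prod_filter, prod_filter, ← mul_prod_erase s _ hi]
  have hsplit : ∏ k ∈ s.erase i, (x i - x k) =
      (∏ k ∈ s.erase i with i < k, (x i - x k)) * ∏ k ∈ s.erase i with k < i, (x i - x k) := by
    rw [← prod_filter_mul_prod_filter_not (s.erase i) (i < ·)]
    congr 1
    refine prod_congr (filter_congr fun k hk => ?_) fun _ _ => rfl
    rw [not_lt]
    exact ⟨fun h => h.lt_of_ne (ne_of_mem_erase hk), le_of_lt⟩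
  have hbelow : ∏ m ∈ s.erase i, (if m < i then x m - x i else 1) =
      (-1) ^ #{m ∈ s | m < i} * ∏ k ∈ s.erase i with k < i, (x i - x k) := by
    rw [← prod_filter, filter_erase, erase_eq_of_notMem (by simp), ← prod_neg]
    simp only [neg_sub]
  unfold vandermondeProd
  rw [← mul_prod_erase s _ hi, hrow i, if_neg (lt_irrefl i), one_mul,
    prod_congr rfl fun m _ => hrow m, prod_mul_distrib, hbelow, hsplit]
  ring

theorem vandermondeProd_update_mul {s : Finset ι} {i : ι} (hi : i ∈ s) (x : ι → K) (y : K) :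
    vandermondeProd s (Function.update x i y) * ∏ k ∈ s.erase i, (x i - x k) =
      vandermondeProd s x * ∏ k ∈ s.erase i, (y - x k) := by
  have hoff : ∀ k ∈ s.erase i, Function.update x i y k = x k :=
    fun k hk => Function.update_of_ne (ne_of_mem_erase hk) y x
  have hrest : vandermondeProd (s.erase i) (Function.update x i y) = vandermondeProd (s.erase i) x :=
    prod_congr rfl fun m hm => prod_congr rfl fun k hk => by
      rw [hoff m hm, hoff k (mem_of_mem_filter k hk)]
  rw [vandermondeProd_eq_mul_erase hi, vandermondeProd_eq_mul_erase hi x, hrest,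
    Function.update_self, prod_congr rfl fun k hk => by rw [hoff k hk]]
  ring

theorem vandermondeProd_ne_zero [IsDomain K] {s : Finset ι} {x : ι → K} (hx : Set.InjOn x s) :
    vandermondeProd s x ≠ 0 :=
  prod_ne_zero_iff.mpr fun m hm => prod_ne_zero_iff.mpr fun k hk => by
    rw [mem_filter] at hk
    exact sub_ne_zero.mpr fun h => hk.2.ne (hx hm hk.1 h)

end Vandermonde

section Hooks

variable {L l : ℕ} {lam : ℕ → ℕ} {i j k : ℕ}

def hookLength (L : ℕ) (lam : ℕ → ℕ) (i j : ℕ) : ℕ := lam i + conjPart L lam j - i - j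

def betaNumber (l : ℕ) (lam : ℕ → ℕ) (i : ℕ) : ℕ := lam i + (l - i)

theorem conjPart_le (L : ℕ) (lam : ℕ → ℕ) (j : ℕ) : conjPart L lam j ≤ L :=
  (card_filter_le _ _).trans (card_range L).le

theorem conjPart_antitone (L : ℕ) (lam : ℕ → ℕ) : Antitone (conjPart L lam) :=
  fun _ _ h => card_le_card (monotone_filter_right _ fun _ _ hr => h.trans hr)

theorem lt_conjPart (hanti : Antitone lam) (hi : i < L) (hj : j ≤ lam i) : i < conjPart L lam j := by
  have hsub : range (i + 1) ⊆ (range L).filter (fun r => j ≤ lam r) := fun r hr => by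
    rw [mem_range] at hr
    exact mem_filter.mpr ⟨mem_range.mpr (by omega), hj.trans (hanti (by omega))⟩
  simpa [conjPart] using card_le_card hsub

theorem conjPart_le_of_lt (hanti : Antitone lam) (hk : lam k < j) : conjPart L lam j ≤ k := by
  have hsub : (range L).filter (fun r => j ≤ lam r) ⊆ range k := fun r hr => by
    rw [mem_filter] at hr
    rw [mem_range]
    by_contra! hkr
    exact absurd (hr.2.trans (hanti hkr)) (by omega)
  simpa [conjPart] using card_le_card hsub

theorem hookLength_strictAntiOn (hanti : Antitone lam) (hi : i < L) :
    StrictAntiOn (hookLength L lam i) (Icc 1 (lam i)) := by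
  intro j hj j' hj' hjj'
  simp only [coe_Icc, Set.mem_Icc] at hj hj'
  have := lt_conjPart hanti hi hj'.2
  have := conjPart_antitone L lam hjj'.le
  unfold hookLength
  omega

theorem hookLength_mem_Icc (hanti : Antitone lam) (hi : i ≤ l) (hj : j ∈ Icc 1 (lam i)) :
    hookLength (l + 1) lam i j ∈ Icc 1 (betaNumber l lam i) := by
  rw [mem_Icc] at hj ⊢
  have := lt_conjPart hanti (Nat.lt_add_one_of_le hi) hj.2
  have := conjPart_le (l + 1) lam j
  unfold hookLength betaNumber
  omega

theorem betaNumber_lt (hanti : Antitone lam) (hik : i < k) (hk : k ≤ l) :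
    betaNumber l lam k < betaNumber l lam i := by
  have := hanti hik.le
  unfold betaNumber
  omega

theorem sub_betaNumber_mem_Icc (hanti : Antitone lam) (hk : k ∈ Ioc i l) :
    betaNumber l lam i - betaNumber l lam k ∈ Icc 1 (betaNumber l lam i) := by
  rw [mem_Ioc] at hk
  have := betaNumber_lt hanti hk.1 hk.2
  rw [mem_Icc]
  omega

/-- The hook of `(i, j)` reaches row `k` exactly when `j ≤ lam k`; in both cases the two
numbers differ. -/
theorem hookLength_ne_sub_betaNumber (hanti : Antitone lam) (hj : j ∈ Icc 1 (lam i))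
    (hk : k ∈ Ioc i l) :
    hookLength (l + 1) lam i j ≠ betaNumber l lam i - betaNumber l lam k := by
  rw [mem_Icc] at hj
  rw [mem_Ioc] at hk
  have := lt_conjPart (L := l + 1) hanti (by omega) hj.2
  have := hanti hk.1.le
  unfold hookLength betaNumber
  rcases le_or_gt j (lam k) with hjk | hjk
  · have := lt_conjPart (L := l + 1) hanti (by omega) hjk
    omega
  · have := conjPart_le_of_lt (L := l + 1) hanti hjk
    omega

theorem sub_betaNumber_strictMonoOn (hanti : Antitone lam) :
    StrictMonoOn (fun k => betaNumber l lam i - betaNumber l lam k) (Ioc i l) := by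
  intro k hk k' hk' hkk'
  simp only [coe_Ioc, Set.mem_Ioc] at hk hk'
  have := betaNumber_lt hanti hkk' hk'.2
  have := betaNumber_lt hanti hk.1 hk.2
  dsimp only
  omega

theorem disjoint_image_hookLength_image_sub_betaNumber (hanti : Antitone lam) :
    Disjoint ((Icc 1 (lam i)).image (hookLength (l + 1) lam i))
      ((Ioc i l).image (fun k => betaNumber l lam i - betaNumber l lam k)) := by
  simp only [disjoint_left, mem_image, not_exists, not_and]
  rintro _ ⟨j, hj, rfl⟩ k hk
  exact (hookLength_ne_sub_betaNumber hanti hj hk).symm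

theorem image_hookLength_union_image_sub_betaNumber (hanti : Antitone lam) (hi : i ≤ l) :
    (Icc 1 (lam i)).image (hookLength (l + 1) lam i) ∪
        (Ioc i l).image (fun k => betaNumber l lam i - betaNumber l lam k) =
      Icc 1 (betaNumber l lam i) := by
  have hsub : (Icc 1 (lam i)).image (hookLength (l + 1) lam i) ∪
      (Ioc i l).image (fun k => betaNumber l lam i - betaNumber l lam k) ⊆
        Icc 1 (betaNumber l lam i) :=
    union_subset (image_subset_iff.mpr fun _ hj => hookLength_mem_Icc hanti hi hj)
      (image_subset_iff.mpr fun _ hk => sub_betaNumber_mem_Icc hanti hk)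
  refine eq_of_subset_of_card_le hsub ?_
  rw [card_union_of_disjoint (disjoint_image_hookLength_image_sub_betaNumber hanti),
    card_image_of_injOn (hookLength_strictAntiOn hanti (Nat.lt_add_one_of_le hi)).injOn,
    card_image_of_injOn (sub_betaNumber_strictMonoOn hanti).injOn,
    Nat.card_Icc, Nat.card_Icc, Nat.card_Ioc]
  unfold betaNumber
  omega

theorem prod_hookLength_mul_prod_sub_betaNumber (hanti : Antitone lam) (hi : i ≤ l) :
    (∏ j ∈ Icc 1 (lam i), hookLength (l + 1) lam i j) *
        ∏ k ∈ Ioc i l, (betaNumber l lam i - betaNumber l lam k) =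
      (betaNumber l lam i).factorial := by
  rw [← prod_Ico_id_eq_factorial, Ico_add_one_right_eq_Icc,
    ← image_hookLength_union_image_sub_betaNumber hanti hi,
    prod_union (disjoint_image_hookLength_image_sub_betaNumber hanti),
    prod_image (hookLength_strictAntiOn hanti (Nat.lt_add_one_of_le hi)).injOn,
    prod_image (sub_betaNumber_strictMonoOn hanti).injOn]

end Hooks

section HookFormula

variable {l : ℕ} {lam : ℕ → ℕ} {i : ℕ}

theorem hookProd_mul_vandermondeProd (hanti : Antitone lam) :
    hookProd (l + 1) lam * vandermondeProd (range (l + 1)) (fun k => (betaNumber l lam k : ℚ)) =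
      ∏ m ∈ range (l + 1), ((betaNumber l lam m).factorial : ℚ) := by
  unfold hookProd vandermondeProd
  rw [← prod_mul_distrib]
  refine prod_congr rfl fun i hi => ?_
  have hil : i ≤ l := Nat.le_of_lt_add_one (mem_range.mp hi)
  have hhook : ∀ j ∈ Icc 1 (lam i),
      (lam i : ℚ) + conjPart (l + 1) lam j - i - j = (hookLength (l + 1) lam i j : ℚ) := by
    intro j hj
    rw [mem_Icc] at hj
    have := lt_conjPart hanti (Nat.lt_add_one_of_le hil) hj.2
    rw [hookLength, Nat.cast_sub (by omega), Nat.cast_sub (by omega), Nat.cast_add]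
  have hbelow : (range (l + 1)).filter (i < ·) = Ioc i l := by
    ext k
    simp only [mem_filter, mem_range, mem_Ioc]
    omega
  have hdiff : ∀ k ∈ Ioc i l, (betaNumber l lam i : ℚ) - betaNumber l lam k =
      ((betaNumber l lam i - betaNumber l lam k : ℕ) : ℚ) := fun k hk => by
    rw [Nat.cast_sub (betaNumber_lt hanti (mem_Ioc.mp hk).1 (mem_Ioc.mp hk).2).le]
  rw [prod_congr rfl hhook, hbelow, prod_congr rfl hdiff, ← Nat.cast_prod, ← Nat.cast_prod,
    ← Nat.cast_mul, prod_hookLength_mul_prod_sub_betaNumber hanti hil]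

theorem betaNumber_injOn (hanti : Antitone lam) :
    Set.InjOn (fun k => (betaNumber l lam k : ℚ)) (range (l + 1)) := by
  intro k hk k' hk' h
  simp only [coe_range, Set.mem_Iio, Nat.cast_inj] at hk hk' h
  by_contra hne
  rcases Nat.lt_or_gt_of_ne hne with hlt | hlt
  · exact (betaNumber_lt hanti hlt (by omega)).ne h.symm
  · exact (betaNumber_lt hanti hlt (by omega)).ne h

theorem betaNumber_update (l : ℕ) (lam : ℕ → ℕ) (i : ℕ) :
    betaNumber l (Function.update lam i (lam i + 1)) =
      Function.update (betaNumber l lam) i (betaNumber l lam i + 1) := by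
  funext k
  rcases eq_or_ne k i with rfl | hk
  · simp only [betaNumber, Function.update_self]
    omega
  · simp only [betaNumber, Function.update_of_ne hk]

theorem antitone_update_add_one (hanti : Antitone lam) (h : i = 0 ∨ lam i < lam (i - 1)) :
    Antitone (Function.update lam i (lam i + 1)) := by
  intro a b hab
  simp only [Function.update_apply]
  split_ifs with hb ha
  · exact le_rfl
  · have := hanti (show a ≤ i - 1 by omega)
    omega
  · have := hanti (show i ≤ b by omega)
    omega
  · exact hanti hab

theorem hookProd_div_hookProd_update (hanti : Antitone lam)
    (hanti' : Antitone (Function.update lam i (lam i + 1))) (hi : i ≤ l) :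
    hookProd (l + 1) lam / hookProd (l + 1) (Function.update lam i (lam i + 1)) =
      (∏ k ∈ (range (l + 1)).erase i, ((betaNumber l lam i : ℚ) + 1 - betaNumber l lam k)) /
        (((betaNumber l lam i : ℚ) + 1) *
          ∏ k ∈ (range (l + 1)).erase i, ((betaNumber l lam i : ℚ) - betaNumber l lam k)) := by
  set s := range (l + 1)
  set x : ℕ → ℚ := fun k => (betaNumber l lam k : ℚ)
  show _ = (∏ k ∈ s.erase i, (x i + 1 - x k)) / ((x i + 1) * ∏ k ∈ s.erase i, (x i - x k))
  have his : i ∈ s := mem_range.mpr (Nat.lt_add_one_of_le hi)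
  have hx' : (fun k => (betaNumber l (Function.update lam i (lam i + 1)) k : ℚ)) =
      Function.update x i (x i + 1) := by
    rw [betaNumber_update]
    funext k
    rcases eq_or_ne k i with rfl | hk
    · simp [x]
    · simp [x, Function.update_of_ne hk]
  have hfact : ∏ m ∈ s, ((betaNumber l (Function.update lam i (lam i + 1)) m).factorial : ℚ) =
      (x i + 1) * ∏ m ∈ s, ((betaNumber l lam m).factorial : ℚ) := by
    rw [betaNumber_update, ← mul_prod_erase s _ his, ← mul_prod_erase s _ his,
      Function.update_self, Nat.factorial_succ,
      prod_congr rfl fun k hk => by rw [Function.update_of_ne (ne_of_mem_erase hk)]]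
    push_cast
    ring
  set F := ∏ m ∈ s, ((betaNumber l lam m).factorial : ℚ)
  have hH : hookProd (l + 1) lam * vandermondeProd s x = F := hookProd_mul_vandermondeProd hanti
  have hH' : hookProd (l + 1) (Function.update lam i (lam i + 1)) *
      vandermondeProd s (Function.update x i (x i + 1)) = (x i + 1) * F := by
    rw [← hx', ← hfact]
    exact hookProd_mul_vandermondeProd hanti'
  have hV := vandermondeProd_update_mul his x (x i + 1)
  have hVne : vandermondeProd s x ≠ 0 := vandermondeProd_ne_zero (betaNumber_injOn hanti)
  have hV'ne : vandermondeProd s (Function.update x i (x i + 1)) ≠ 0 := by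
    rw [← hx']
    exact vandermondeProd_ne_zero (betaNumber_injOn hanti')
  have hEne : ∏ k ∈ s.erase i, (x i - x k) ≠ 0 :=
    prod_ne_zero_iff.mpr fun k hk => sub_ne_zero.mpr fun h =>
      ne_of_mem_erase hk ((betaNumber_injOn hanti his (mem_of_mem_erase hk) h).symm)
  have hFne : F ≠ 0 := prod_ne_zero_iff.mpr fun m _ => by positivity
  have hx1 : x i + 1 ≠ 0 := by positivity
  rw [eq_div_of_mul_eq hVne hH, eq_div_of_mul_eq hV'ne hH']
  field_simp
  exact hV

theorem transProb_eq (hanti : Antitone lam) (hi : i ≤ l) :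
    transProb (l + 1) lam i =
      (∏ k ∈ (range (l + 1)).erase i, ((betaNumber l lam i : ℚ) + 1 - betaNumber l lam k)) /
        (((betaNumber l lam i : ℚ) + 1) *
          ∏ k ∈ (range (l + 1)).erase i, ((betaNumber l lam i : ℚ) - betaNumber l lam k)) := by
  unfold transProb
  split_ifs with hanti'
  · exact hookProd_div_hookProd_update hanti hanti' hi
  · -- row `i - 1` has the same length, so `β_{i-1} = β_i + 1` and the numerator vanishes
    have hrow : i ≠ 0 ∧ lam (i - 1) ≤ lam i := by
      by_contra! h
      exact hanti' (antitone_update_add_one hanti (by omega))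
    have hmem : i - 1 ∈ (range (l + 1)).erase i := by
      rw [mem_erase, mem_range]
      omega
    have hβ : betaNumber l lam (i - 1) = betaNumber l lam i + 1 := by
      have := hanti (Nat.sub_le i 1)
      unfold betaNumber
      omega
    rw [prod_eq_zero hmem (by rw [hβ]; push_cast; ring), zero_div]

end HookFormula

section Lagrange

variable {F : Type*} [Field F] {ι : Type*} [DecidableEq ι]

theorem sum_prod_add_one_sub_div_eq_one {s : Finset ι} {x : ι → F} (hx : Set.InjOn x s)
    {j : ι} (hj : j ∈ s) (hxj : x j = 0) (hx1 : ∀ i ∈ s, x i + 1 ≠ 0) :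
    ∑ i ∈ s, (∏ k ∈ s.erase i, (x i + 1 - x k)) / ((x i + 1) * ∏ k ∈ s.erase i, (x i - x k))
      = 1 := by
  set Q := Lagrange.nodal (s.erase j) (fun k => x k - 1)
  have hQ : #s = Q.degree + 1 := by
    rw [Lagrange.degree_nodal, card_erase_of_mem hj]
    norm_cast
    have := card_pos.mpr ⟨j, hj⟩
    omega
  have hnum : ∀ i ∈ s, ∏ k ∈ s.erase i, (x i + 1 - x k) = (x i + 1) * Q.eval (x i) := by
    intro i hi
    calc ∏ k ∈ s.erase i, (x i + 1 - x k) = ∏ k ∈ s, (x i + 1 - x k) := by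
          rw [← mul_prod_erase s _ hi, add_sub_cancel_left, one_mul]
      _ = (x i + 1 - x j) * ∏ k ∈ s.erase j, (x i + 1 - x k) := (mul_prod_erase s _ hj).symm
      _ = (x i + 1) * Q.eval (x i) := by
          simp only [hxj, sub_zero, Q, Lagrange.eval_nodal, sub_sub_eq_add_sub]
  calc _ = ∑ i ∈ s, Q.eval (x i) / ∏ k ∈ s.erase i, (x i - x k) := by
        refine sum_congr rfl fun i hi => ?_
        rw [hnum i hi, mul_div_mul_left _ _ (hx1 i hi)]
    _ = Q.leadingCoeff := (Lagrange.leadingCoeff_eq_sum hx hQ).symm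
    _ = 1 := Lagrange.nodal_monic

end Lagrange

/-- The transition measure `ω_λ` is a probability measure:
`∑_{i=1}^{ℓ(λ)+1} cᵢ(λ) = 1`. -/
theorem transProb_sum_eq_one (l : ℕ) (lam : ℕ → ℕ)
    (hanti : Antitone lam) (hsupp : ∀ i, l ≤ i → lam i = 0) :
    ∑ i ∈ Finset.range (l + 1), transProb (l + 1) lam i = 1 := by
  rw [sum_congr rfl fun i hi => transProb_eq hanti (Nat.le_of_lt_add_one (mem_range.mp hi))]
  refine sum_prod_add_one_sub_div_eq_one (betaNumber_injOn hanti) (self_mem_range_succ l) ?_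
    fun i _ => by positivity
  simp [betaNumber, hsupp l le_rfl]
end

section
/- The Schur polynomials s_λ(x_1,...,x_N) are eigenfunctions of the operator D_2 = (1/2)∑_i x_i²∂²/∂x_i² + ∑_{i≠j} x_i²/(x_i-x_j)·∂/∂x_i, with eigenvalue ∑_{(i,j)∈λ}(j-i) + |λ|·(N-1); that is, D_2·s_λ = (p_1(A_λ) + |λ|(N-1))·s_λ, where p_1(A_λ) = ∑_{(i,j)∈λ}(j-i) is the sum of contents of λ. -/
/-!
Write `E = ∑ᵢ xᵢ² ∂ᵢ²` and `δ = (N-1, …, 1, 0)`. Since `E` acts on the monomial `x^m` by the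
scalar `∑ mᵢ(mᵢ - 1)`, which is invariant under permuting `m`, every alternant
`a_α = det (xⱼ^αᵢ)` is an eigenvector of `E` with eigenvalue `∑ αᵢ(αᵢ - 1)`; this applies to
`a_{λ+δ} = s_λ a_δ` and to the Vandermonde product `a_δ = ∏_{i<j} (xᵢ - xⱼ)`. Expanding
`E (s_λ a_δ)` by the Leibniz rule and dividing by `a_δ` at a point with distinct coordinates,
where `∂ᵢ a_δ / a_δ = ∑_{j≠i} 1/(xᵢ - xⱼ)`, yields `D₂ s_λ = c s_λ` with
`2c = ∑ (λᵢ+δᵢ)(λᵢ+δᵢ-1) - ∑ δᵢ(δᵢ-1) = ∑ λᵢ(λᵢ-1) + 2 ∑ λᵢ δᵢ`, twice the content sum plus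
`2|λ|(N-1)`.
-/

open scoped Matrix
open Finset MvPolynomial

section SecondEuler

variable {R σ : Type*} [CommRing R]

theorem X_sq_mul_pderiv_pderiv (i : σ) (p : MvPolynomial σ R) :
    X i ^ 2 * pderiv i (pderiv i p) = X i * pderiv i (X i * pderiv i p) - X i * pderiv i p := by
  rw [Derivation.leibniz, pderiv_X_self]
  simp only [smul_eq_mul]
  ring

theorem X_sq_mul_pderiv_pderiv_monomial (i : σ) (m : σ →₀ ℕ) (r : R) :
    X i ^ 2 * pderiv i (pderiv i (monomial m r)) = ((m i : R) * (m i - 1)) • monomial m r := by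
  rw [X_sq_mul_pderiv_pderiv, X_mul_pderiv_monomial, map_nsmul, mul_smul_comm,
    X_mul_pderiv_monomial, smul_smul, ← Nat.cast_smul_eq_nsmul R, ← Nat.cast_smul_eq_nsmul R (m i),
    ← sub_smul, Nat.cast_mul, mul_sub_one]

variable [Fintype σ]

-- `D₂ = secondEuler / 2 + ∑_{i ≠ j} xᵢ² / (xᵢ - xⱼ) ∂ᵢ`
noncomputable def secondEuler : MvPolynomial σ R →ₗ[R] MvPolynomial σ R :=
  ∑ i, LinearMap.mulLeft R (X i ^ 2) ∘ₗ (pderiv i).toLinearMap ∘ₗ (pderiv i).toLinearMap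

theorem secondEuler_apply (p : MvPolynomial σ R) :
    secondEuler p = ∑ i, X i ^ 2 * pderiv i (pderiv i p) := by
  simp [secondEuler]

theorem secondEuler_monomial (m : σ →₀ ℕ) (r : R) :
    secondEuler (monomial m r) = (∑ i, (m i : R) * (m i - 1)) • monomial m r := by
  simp only [secondEuler_apply, X_sq_mul_pderiv_pderiv_monomial, Finset.sum_smul]

theorem secondEuler_mul (p q : MvPolynomial σ R) :
    secondEuler (p * q) =
      secondEuler p * q + 2 * ∑ i, X i ^ 2 * (pderiv i p * pderiv i q) + p * secondEuler q := by
  simp only [secondEuler_apply, Derivation.leibniz, map_add, smul_eq_mul, Finset.mul_sum,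
    Finset.sum_mul, ← Finset.sum_add_distrib]
  refine Finset.sum_congr rfl fun i _ => ?_
  ring

theorem prod_X_pow_eq_monomial_equivFunOnFinite (e : σ → ℕ) :
    ∏ i, (X i : MvPolynomial σ R) ^ e i = monomial (Finsupp.equivFunOnFinite.symm e) 1 := by
  rw [monomial_eq, C_1, one_mul, Finsupp.prod_fintype _ _ fun _ => pow_zero _]
  rfl

theorem secondEuler_det_of_pow [DecidableEq σ] (e : σ → ℕ) :
    secondEuler (Matrix.of fun i j : σ => (X j : MvPolynomial σ R) ^ e i).det =
      (∑ i, (e i : R) * (e i - 1)) •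
        (Matrix.of fun i j : σ => (X j : MvPolynomial σ R) ^ e i).det := by
  simp only [Matrix.det_apply, Matrix.of_apply, prod_X_pow_eq_monomial_equivFunOnFinite, map_sum,
    Finset.smul_sum]
  refine sum_congr rfl fun π _ => ?_
  rw [Units.smul_def, map_zsmul, secondEuler_monomial, smul_comm]
  congr 1
  exact Equiv.sum_comp π fun k => (e k : R) * (e k - 1)

theorem eval_secondEuler_of_mul_eigen {K : Type*} [Field K] (x : σ → K)
    (P V : MvPolynomial σ K) (a b : K) (r : σ → K)
    (hPV : secondEuler (P * V) = a • (P * V)) (hV : secondEuler V = b • V)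
    (hV0 : eval x V ≠ 0) (hdV : ∀ i, eval x (pderiv i V) = r i * eval x V) :
    eval x (secondEuler P) + 2 * ∑ i, x i ^ 2 * r i * eval x (pderiv i P) =
      (a - b) * eval x P := by
  have h := congrArg (eval x) hPV
  rw [secondEuler_mul, hV] at h
  simp only [map_add, map_mul, smul_eval, map_sum, map_pow, eval_X, hdV, map_ofNat] at h
  have hcross : ∑ i, x i ^ 2 * (eval x (pderiv i P) * (r i * eval x V)) =
      (∑ i, x i ^ 2 * r i * eval x (pderiv i P)) * eval x V := by
    rw [sum_mul]
    exact sum_congr rfl fun i _ => by ring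
  rw [hcross] at h
  apply mul_right_cancel₀ hV0
  linear_combination h

end SecondEuler

theorem prod_filter_lt_eq_prod_Ioi {ι M : Type*} [Fintype ι] [LinearOrder ι]
    [LocallyFiniteOrderTop ι] [CommMonoid M] (f : ι → ι → M) :
    ∏ p ∈ univ.filter (fun p : ι × ι => p.1 < p.2), f p.1 p.2 = ∏ i, ∏ j ∈ Ioi i, f i j := by
  rw [prod_filter, Fintype.prod_prod_type]
  refine prod_congr rfl fun i _ => ?_
  rw [← prod_filter]
  congr 1
  ext j
  simp

theorem prod_filter_lt_sub_eq_det {R : Type*} [CommRing R] {N : ℕ} (v : Fin N → R) :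
    ∏ p ∈ univ.filter (fun p : Fin N × Fin N => p.1 < p.2), (v p.1 - v p.2) =
      (Matrix.of fun i j : Fin N => v j ^ (N - 1 - (i : ℕ))).det := by
  have hrev : (Matrix.of fun i j : Fin N => v j ^ (N - 1 - (i : ℕ))) =
      (Matrix.projVandermonde 1 v)ᵀ := by
    ext i j
    simp [Matrix.projVandermonde_apply, Fin.val_rev, Nat.sub_sub, Nat.add_comm]
  rw [hrev, Matrix.det_transpose, Matrix.det_projVandermonde,
    prod_filter_lt_eq_prod_Ioi fun i j => v i - v j]
  simp

theorem map_derivation_prod_eq_sum_div_mul {ι R A K : Type*} [CommSemiring R] [CommRing A]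
    [Algebra R A] [Field K] (D : Derivation R A A) (φ : A →+* K) (s : Finset ι) (f : ι → A)
    (hf : ∀ k ∈ s, φ (f k) ≠ 0) :
    φ (D (∏ k ∈ s, f k)) = (∑ k ∈ s, φ (D (f k)) / φ (f k)) * φ (∏ k ∈ s, f k) := by
  classical
  induction s using Finset.induction_on with
  | empty => simp
  | insert a s ha ih =>
    have hfa := hf a (mem_insert_self a s)
    rw [prod_insert ha, sum_insert ha, Derivation.leibniz, map_add, smul_eq_mul, smul_eq_mul,
      map_mul, map_mul, ih fun k hk => hf k (mem_insert_of_mem hk), map_mul]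
    field_simp
    ring

theorem sum_filter_lt_ite_sub_div_eq_sum_inv {ι K : Type*} [Fintype ι] [LinearOrder ι] [Field K]
    (x : ι → K) (i : ι) :
    ∑ p ∈ univ.filter (fun p : ι × ι => p.1 < p.2),
      ((if p.1 = i then 1 else 0) - (if p.2 = i then 1 else 0)) / (x p.1 - x p.2) =
      ∑ j ∈ univ.filter (· ≠ i), (x i - x j)⁻¹ := by
  have hsplit : ∀ a b : ι,
      (if a < b then ((if a = i then 1 else 0) - (if b = i then 1 else 0)) / (x a - x b) else 0)
        = (if a = i then (if i < b then (x i - x b)⁻¹ else 0) else 0)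
          + (if b = i then (if a < i then (x i - x a)⁻¹ else 0) else 0) := by
    intro a b
    by_cases ha : a = i <;> by_cases hb : b = i <;> simp [ha, hb, neg_div, ← inv_neg]
  have hmerge : ∀ j, (if i < j then (x i - x j)⁻¹ else 0) + (if j < i then (x i - x j)⁻¹ else 0)
      = if j ≠ i then (x i - x j)⁻¹ else 0 := by
    intro j
    rcases lt_trichotomy i j with h | h | h
    · simp [h, h.ne', not_lt_of_gt h]
    · simp [h]
    · simp [h, h.ne, not_lt_of_gt h]
  rw [sum_filter, Fintype.sum_prod_type, sum_filter]
  simp only [hsplit, sum_add_distrib, sum_ite_eq', mem_univ, if_true]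
  rw [sum_comm]
  simp only [sum_ite_eq', mem_univ, if_true, ← sum_add_distrib, hmerge]

theorem two_mul_sum_Icc_sub {K : Type*} [CommRing K] (L : ℕ) (c : K) :
    2 * ∑ j ∈ Icc 1 L, ((j : K) - c) = L * (L + 1) - 2 * L * c := by
  induction L with
  | zero => simp
  | succ n ih =>
    rw [sum_Icc_succ_top (by omega), mul_add, ih]
    push_cast
    ring

theorem two_mul_sum_contents_add {K : Type*} [CommRing K] (N : ℕ) (lam : Fin N → ℕ) :
    2 * ((∑ i : Fin N, ∑ j ∈ Icc 1 (lam i), ((j : K) - ((i : K) + 1))) +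
        (∑ i, (lam i : K)) * ((N : K) - 1)) =
      ∑ i : Fin N, (((lam i + (N - 1 - i) : ℕ) : K) * (((lam i + (N - 1 - i) : ℕ) : K) - 1) -
        ((N - 1 - i : ℕ) : K) * (((N - 1 - i : ℕ) : K) - 1)) := by
  rw [sum_mul, ← sum_add_distrib, mul_sum]
  refine sum_congr rfl fun i _ => ?_
  have hδ : ((N - 1 - i : ℕ) : K) = N - 1 - i := by
    rw [Nat.sub_sub, Nat.cast_sub (by omega)]
    push_cast
    ring
  rw [mul_add, two_mul_sum_Icc_sub, Nat.cast_add, hδ]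
  ring

-- Rows are 0-indexed: the cell in row `i`, column `j` has content `j - (i + 1)`.
/-- The Schur polynomials (characterized by the bialternant formula) are
eigenfunctions of `D₂ = (1/2)∑ xᵢ²∂²/∂xᵢ² + ∑_{i≠j} xᵢ²/(xᵢ-xⱼ) ∂/∂xᵢ` with
eigenvalue `p₁(A_λ) + |λ|(N-1)`, where `p₁(A_λ) = ∑_{(i,j)∈λ}(j-i)` is the sum
of contents of `λ` (rows 0-indexed: the content of the cell in row `i`, column
`j` is `j-(i+1)`).  Stated pointwise at every tuple of pairwise distinct
rational numbers. -/
theorem D2_eigenvalue_schur (N : ℕ) (s : (Fin N → ℕ) → MvPolynomial (Fin N) ℚ)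
    (hs : ∀ μ : Fin N → ℕ, Antitone μ →
      s μ * ∏ p ∈ Finset.univ.filter (fun p : Fin N × Fin N => p.1 < p.2),
          (X p.1 - X p.2) =
        Matrix.det (Matrix.of fun i j : Fin N => (X j : MvPolynomial (Fin N) ℚ) ^
          (μ i + (N - 1 - (i : ℕ)))))
    (lam : Fin N → ℕ) (hlam : Antitone lam)
    (x : Fin N → ℚ) (hx : Function.Injective x) :
    (1 / 2) * ∑ i : Fin N, x i ^ 2 *
          MvPolynomial.eval x (MvPolynomial.pderiv i (MvPolynomial.pderiv i (s lam))) +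
        ∑ i : Fin N, ∑ j ∈ Finset.univ.filter (fun j => j ≠ i),
          x i ^ 2 / (x i - x j) * MvPolynomial.eval x (MvPolynomial.pderiv i (s lam)) =
      ((∑ i : Fin N, ∑ j ∈ Finset.Icc 1 (lam i), ((j : ℚ) - ((i : ℚ) + 1))) +
          (∑ i : Fin N, (lam i : ℚ)) * ((N : ℚ) - 1)) *
        MvPolynomial.eval x (s lam) := by
  classical
  set V : MvPolynomial (Fin N) ℚ :=
    ∏ p ∈ univ.filter (fun p : Fin N × Fin N => p.1 < p.2), (X p.1 - X p.2) with hVdef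
  have hfactor : ∀ p ∈ univ.filter (fun p : Fin N × Fin N => p.1 < p.2),
      eval x (X p.1 - X p.2) ≠ 0 := fun p hp => by
    simpa [sub_eq_zero] using hx.ne (mem_filter.1 hp).2.ne
  have hV0 : eval x V ≠ 0 := by
    rw [hVdef, map_prod]
    exact prod_ne_zero_iff.2 hfactor
  have hdV : ∀ i, eval x (pderiv i V) = (∑ j ∈ univ.filter (· ≠ i), (x i - x j)⁻¹) * eval x V := by
    intro i
    rw [hVdef, map_derivation_prod_eq_sum_div_mul _ _ _ _ hfactor,
      ← sum_filter_lt_ite_sub_div_eq_sum_inv]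
    simp [Pi.single_apply, apply_ite (eval x)]
  have key := eval_secondEuler_of_mul_eigen x (s lam) V _ _ _
    (by rw [hs lam hlam]; exact secondEuler_det_of_pow _)
    (by rw [hVdef, prod_filter_lt_sub_eq_det]; exact secondEuler_det_of_pow _) hV0 hdV
  rw [← sum_sub_distrib, ← two_mul_sum_contents_add, secondEuler_apply, map_sum] at key
  simp only [map_mul, map_pow, eval_X] at key
  have hcross : ∑ i, ∑ j ∈ univ.filter (· ≠ i), x i ^ 2 / (x i - x j) * eval x (pderiv i (s lam)) =
      ∑ i, x i ^ 2 * (∑ j ∈ univ.filter (· ≠ i), (x i - x j)⁻¹) * eval x (pderiv i (s lam)) := by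
    simp only [div_eq_mul_inv, mul_sum, sum_mul]
  rw [hcross]
  linear_combination key / 2
end

section
/- Define ψ_ρ(t) for partitions ρ by: |ρ|!·ψ_ρ(t) = (e^t - 1)^{r-1}·(e^{-t} - 1)^s if ρ is a hook (r, 1^s) with r ≥ 1, and ψ_ρ(t) = 0 otherwise. Then for every partition ρ, these functions satisfy the two differential relations: (a) ∑_{i=1}^{ℓ(ρ)+1} ψ'_{ρ^{(i)}}(t) = ∑_{i=1}^{ℓ(ρ)+1} (ρ_i - i + 1)·ψ_{ρ^{(i)}}(t), and (b) ∑_{i=1}^{ℓ(ρ)+1} (ρ_i - i + 1)·ψ'_{ρ^{(i)}}(t) = ∑_{i=1}^{ℓ(ρ)+1} (ρ_i - i + 1)²·ψ_{ρ^{(i)}}(t) + |ρ|·ψ_ρ(t). -/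
/-!
Write `G = eᵗ - 1` and `H = e⁻ᵗ - 1`. Then `G' = G + 1`, `H' = -(H + 1)` and, since
`eᵗ e⁻ᵗ = 1`, `G H = -G - H`; hence
`(G^(r+1) H^s)' = (r+1) G^(r+1) H^s + (r+s+1) G^r H^s` and
`(G^r H^(s+1))' = -(s+1) G^r H^(s+1) - (r+s+1) G^r H^s`.
Only hooks contribute to the sums. For the empty partition the single addable box gives `ψ = 1`;
if `ρ` is not a hook, neither is any `ρ^(i)`; and for the hook `(r+1, 1^s)` only the boxes in
rows `0` and `s+1`, of contents `r+1` and `-(s+1)`, survive. Both relations are then the two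
derivative identities above, the term `|ρ| ψ_ρ` coming from
`(r+s+1)(r+s+2) / (r+s+2)! = |ρ| / |ρ|!`.
-/

open Finset PowerSeries

/-- The hook partition `(r, 1^s)` as a weakly decreasing function `ℕ → ℕ`
(0-indexed rows): part `r` in row `0`, parts `1` in rows `1,…,s`. -/
def hookFun (r s : ℕ) : ℕ → ℕ :=
  fun i => if i = 0 then r else if i ≤ s then 1 else 0

namespace PowerSeries

theorem derivative_rescale {R : Type*} [CommSemiring R] (a : R) (f : R⟦X⟧) :
    d⁄dX R (rescale a f) = C a * rescale a (d⁄dX R f) := by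
  ext n
  simp only [coeff_derivative, coeff_rescale, coeff_C_mul, pow_succ]
  ring

variable (A : Type*) [CommRing A] [Algebra ℚ A]

theorem derivative_exp_sub_one : d⁄dX A (exp A - 1) = exp A - 1 + 1 := by
  rw [map_sub, derivative_one, derivative_exp A]
  ring

theorem derivative_rescale_neg_one_exp_sub_one :
    d⁄dX A (rescale (-1) (exp A) - 1) = -(rescale (-1) (exp A) - 1 + 1) := by
  rw [map_sub, derivative_one, derivative_rescale, derivative_exp A]
  simp

theorem exp_sub_one_mul_rescale_neg_one_exp_sub_one :
    (exp A - 1) * (rescale (-1) (exp A) - 1) = -(exp A - 1) - (rescale (-1) (exp A) - 1) := by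
  have h : exp A * rescale (-1) (exp A) = 1 := exp_mul_exp_neg_eq_one
  linear_combination h

theorem rescale_neg_one_exp_sub_one_mul_derivative_pow (r : ℕ) :
    (rescale (-1) (exp A) - 1) * d⁄dX A ((exp A - 1) ^ r) = -(r * (exp A - 1) ^ r) := by
  cases r with
  | zero => simp
  | succ r =>
    rw [derivative_pow, derivative_exp_sub_one A, Nat.add_sub_cancel]
    linear_combination
      (↑(r + 1) * (exp A - 1) ^ r) * exp_sub_one_mul_rescale_neg_one_exp_sub_one A

theorem exp_sub_one_mul_derivative_pow (s : ℕ) :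
    (exp A - 1) * d⁄dX A ((rescale (-1) (exp A) - 1) ^ s) =
      s * (rescale (-1) (exp A) - 1) ^ s := by
  cases s with
  | zero => simp
  | succ s =>
    rw [derivative_pow, derivative_rescale_neg_one_exp_sub_one A, Nat.add_sub_cancel]
    linear_combination (-(↑(s + 1) : A⟦X⟧) * (rescale (-1) (exp A) - 1) ^ s) *
      exp_sub_one_mul_rescale_neg_one_exp_sub_one A

noncomputable def hookSeries (r s : ℕ) : A⟦X⟧ :=
  (exp A - 1) ^ r * (rescale (-1) (exp A) - 1) ^ s

variable {A}

theorem derivative_hookSeries_succ_left (r s : ℕ) :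
    d⁄dX A (hookSeries A (r + 1) s) =
      ((r : ℚ) + 1) • hookSeries A (r + 1) s + ((r : ℚ) + 1 + s) • hookSeries A r s := by
  have hG := derivative_pow (exp A - 1) (r + 1)
  rw [derivative_exp_sub_one A, Nat.add_sub_cancel] at hG
  rw [hookSeries, hookSeries, Derivation.leibniz, hG, smul_eq_mul, smul_eq_mul]
  simp only [Algebra.smul_def, map_add, map_natCast, map_one, Nat.cast_succ]
  linear_combination (exp A - 1) ^ r * exp_sub_one_mul_derivative_pow A s

theorem derivative_hookSeries_succ_right (r s : ℕ) :
    d⁄dX A (hookSeries A r (s + 1)) =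
      -((s : ℚ) + 1) • hookSeries A r (s + 1) - ((r : ℚ) + s + 1) • hookSeries A r s := by
  have hH := derivative_pow (rescale (-1) (exp A) - 1) (s + 1)
  rw [derivative_rescale_neg_one_exp_sub_one A, Nat.add_sub_cancel] at hH
  rw [hookSeries, hookSeries, Derivation.leibniz, hH, smul_eq_mul, smul_eq_mul]
  simp only [Algebra.smul_def, map_neg, map_add, map_natCast, map_one, Nat.cast_succ]
  linear_combination
    (rescale (-1) (exp A) - 1) ^ s * rescale_neg_one_exp_sub_one_mul_derivative_pow A r

/-- `ψ r s` plays the role of `ψ_{(r+1, 1^s)}`. -/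
theorem hookSeries_relations (ψ : ℕ → ℕ → A⟦X⟧)
    (hψ : ∀ r s, ((r + 1 + s).factorial : ℚ) • ψ r s = hookSeries A r s) (r s : ℕ) :
    d⁄dX A (ψ (r + 1) s) + d⁄dX A (ψ r (s + 1)) =
        ((r : ℚ) + 1) • ψ (r + 1) s - ((s : ℚ) + 1) • ψ r (s + 1) ∧
      ((r : ℚ) + 1) • d⁄dX A (ψ (r + 1) s) - ((s : ℚ) + 1) • d⁄dX A (ψ r (s + 1)) =
        ((r : ℚ) + 1) ^ 2 • ψ (r + 1) s + ((s : ℚ) + 1) ^ 2 • ψ r (s + 1) +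
          ((r + 1 + s : ℕ) : ℚ) • ψ r s := by
  have hψ' : ∀ r s, ψ r s = ((r + 1 + s).factorial : ℚ)⁻¹ • hookSeries A r s := by
    intro r s
    rw [← hψ, inv_smul_smul₀ (by positivity)]
  rw [hψ', hψ', hψ', map_rat_smul, map_rat_smul, derivative_hookSeries_succ_left,
    derivative_hookSeries_succ_right, show r + 1 + 1 + s = r + 1 + s + 1 by omega,
    show r + 1 + (s + 1) = r + 1 + s + 1 by omega, Nat.factorial_succ]
  push_cast
  constructor <;> match_scalars <;> field_simp <;> ring

end PowerSeries

section Partitions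

open Function

variable {ρ : ℕ → ℕ} {l : ℕ}

open scoped Classical

theorem hookFun_zero (r s : ℕ) : hookFun r s 0 = r := rfl

theorem hookFun_succ (r s j : ℕ) : hookFun r s (j + 1) = if j < s then 1 else 0 := by
  simp only [hookFun, Nat.add_one_ne_zero, if_false, Nat.add_one_le_iff]

theorem hookFun_of_lt {r s i : ℕ} (h : s < i) : hookFun r s i = 0 := by
  grind [hookFun]

theorem antitone_hookFun {r s : ℕ} (hr : 1 ≤ r) : Antitone (hookFun r s) := by
  intro a b hab
  unfold hookFun
  split_ifs <;> omega

theorem sum_range_hookFun {r s : ℕ} (hs : s < l) : ∑ i ∈ range l, hookFun r s i = r + s := by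
  have hhead : ∀ i ∈ range s, hookFun r s (i + 1) = 1 := fun i hi => by
    rw [hookFun_succ, if_pos (mem_range.1 hi)]
  have htail : ∀ i ∈ Ico (s + 1) l, hookFun r s i = 0 := fun i hi => by
    grind [hookFun]
  rw [← sum_range_add_sum_Ico _ (show s + 1 ≤ l by omega), sum_range_succ', sum_congr rfl hhead,
    sum_eq_zero htail]
  simp [hookFun, add_comm]

theorem update_zero_eq_hookFun : update (0 : ℕ → ℕ) 0 1 = hookFun 1 0 := by
  funext i
  rcases i with _ | i <;> simp [hookFun]

theorem update_hookFun_zero (r s : ℕ) :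
    update (hookFun r s) 0 (hookFun r s 0 + 1) = hookFun (r + 1) s := by
  funext i
  grind [hookFun, update_apply]

theorem update_hookFun_succ (r s : ℕ) :
    update (hookFun r s) (s + 1) (hookFun r s (s + 1) + 1) = hookFun r (s + 1) := by
  funext i
  grind [hookFun, update_apply]

theorem eq_zero_or_two_le_or_eq_hookFun (hρ : Antitone ρ) (hl : ∀ i, l ≤ i → ρ i = 0) :
    ρ = 0 ∨ 2 ≤ ρ 1 ∨ ∃ r s, s < l ∧ ρ = hookFun (r + 1) s := by
  rcases Nat.eq_zero_or_pos (ρ 0) with h0 | h0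
  · exact Or.inl (funext fun i => Nat.le_zero.1 (h0 ▸ hρ i.zero_le))
  rcases le_or_gt 2 (ρ 1) with h1 | h1
  · exact Or.inr (Or.inl h1)
  have hl0 : 0 < l := Nat.pos_of_ne_zero fun h => h0.ne' (hl 0 h.le)
  have hex : ∃ n, ρ (n + 1) = 0 := ⟨l - 1, hl _ (by omega)⟩
  refine Or.inr (Or.inr ⟨ρ 0 - 1, Nat.find hex, ?_, funext fun i => ?_⟩)
  · have := Nat.find_min' hex (hl (l - 1 + 1) (by omega))
    omega
  rcases i with _ | j
  · rw [hookFun_zero]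
    omega
  rw [hookFun_succ]
  split_ifs with hj
  · have := Nat.find_min hex hj
    have := hρ (show 1 ≤ j + 1 by omega)
    omega
  · have := Nat.find_spec hex
    have := hρ (show Nat.find hex + 1 ≤ j + 1 by omega)
    omega

noncomputable def addableRows (l : ℕ) (ρ : ℕ → ℕ) : Finset ℕ :=
  (range (l + 1)).filter fun i => Antitone (update ρ i (ρ i + 1))

theorem antitone_update_add_one_s16 (hρ : Antitone ρ) {i : ℕ} (hi : ∀ j < i, ρ i < ρ j) :
    Antitone (update ρ i (ρ i + 1)) := by
  refine antitone_nat_of_succ_le fun n => ?_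
  have hn := hρ (Nat.le_add_right n 1)
  rcases eq_or_ne (n + 1) i with rfl | h₁
  · simpa using hi n n.lt_add_one
  rcases eq_or_ne n i with rfl | h₂
  · simp only [update_self, update_of_ne h₁]
    omega
  · simpa only [update_of_ne h₁, update_of_ne h₂] using hn

theorem lt_of_antitone_update_add_one {i : ℕ}
    (h : Antitone (update ρ (i + 1) (ρ (i + 1) + 1))) : ρ (i + 1) < ρ i := by
  simpa using h i.le_succ

theorem update_add_one_eq_zero_of_max_le (hl : ∀ j, l ≤ j → ρ j = 0) (i j : ℕ)
    (hj : max l (i + 1) ≤ j) : update ρ i (ρ i + 1) j = 0 := by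
  rw [update_of_ne (by omega), hl j (by omega)]

theorem sum_addableRows_zero {M : Type*} [AddCommMonoid M] (f : ℕ → M) :
    ∑ i ∈ addableRows l 0, f i = f 0 := by
  refine sum_eq_single_of_mem 0 ?_ fun i hi hi0 => ?_
  · simpa [addableRows] using antitone_update_add_one_s16 (ρ := 0) antitone_const (i := 0) (by simp)
  · obtain ⟨j, rfl⟩ := Nat.exists_eq_succ_of_ne_zero hi0
    simpa using lt_of_antitone_update_add_one (mem_filter.1 hi).2

theorem sum_addableRows_hookFun {M : Type*} [AddCommMonoid M] {r s : ℕ} (hs : s < l)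
    (f : ℕ → M) (hf : ∀ i ∈ addableRows l (hookFun (r + 1) s),
      2 ≤ update (hookFun (r + 1) s) i (hookFun (r + 1) s i + 1) 1 → f i = 0) :
    ∑ i ∈ addableRows l (hookFun (r + 1) s), f i = f 0 + f (s + 1) := by
  have hanti := antitone_hookFun (r := r + 1) (s := s) (by omega)
  refine sum_eq_add_of_mem 0 (s + 1) ?_ ?_ (by omega) fun i hi ⟨hi0, his⟩ => hf i hi ?_
  · simpa [addableRows] using antitone_update_add_one_s16 hanti (i := 0) (by simp)
  · refine mem_filter.2 ⟨mem_range.2 (by omega), antitone_update_add_one_s16 hanti fun j hj => ?_⟩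
    grind [hookFun]
  · obtain ⟨j, rfl⟩ := Nat.exists_eq_succ_of_ne_zero hi0
    have := lt_of_antitone_update_add_one (mem_filter.1 hi).2
    grind [hookFun, update_apply]

end Partitions

open scoped Classical in
/-- Rows are 0-indexed, so the content `ρᵢ - i + 1` of the paper reads `ρ i - i`. -/
theorem psi_differential_system (ψ : (ℕ → ℕ) → PowerSeries ℚ)
    (hψhook : ∀ r s : ℕ, 1 ≤ r →
      ((r + s).factorial : ℚ) • ψ (hookFun r s) =
        (PowerSeries.exp ℚ - 1) ^ (r - 1) *
          (PowerSeries.rescale (-1 : ℚ) (PowerSeries.exp ℚ) - 1) ^ s)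
    (hψnonhook : ∀ ρ : ℕ → ℕ, Antitone ρ → (∃ l, ∀ i, l ≤ i → ρ i = 0) →
      2 ≤ ρ 1 → ψ ρ = 0)
    (l : ℕ) (ρ : ℕ → ℕ) (hanti : Antitone ρ) (hsupp : ∀ i, l ≤ i → ρ i = 0) :
    (∑ i ∈ (Finset.range (l + 1)).filter
          (fun i => Antitone (Function.update ρ i (ρ i + 1))),
        PowerSeries.derivativeFun (ψ (Function.update ρ i (ρ i + 1))) =
      ∑ i ∈ (Finset.range (l + 1)).filter
          (fun i => Antitone (Function.update ρ i (ρ i + 1))),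
        ((ρ i : ℚ) - (i : ℚ)) • ψ (Function.update ρ i (ρ i + 1))) ∧
    (∑ i ∈ (Finset.range (l + 1)).filter
          (fun i => Antitone (Function.update ρ i (ρ i + 1))),
        ((ρ i : ℚ) - (i : ℚ)) •
          PowerSeries.derivativeFun (ψ (Function.update ρ i (ρ i + 1))) =
      ∑ i ∈ (Finset.range (l + 1)).filter
          (fun i => Antitone (Function.update ρ i (ρ i + 1))),
        ((ρ i : ℚ) - (i : ℚ)) ^ 2 • ψ (Function.update ρ i (ρ i + 1)) +
        ((∑ i ∈ Finset.range l, ρ i : ℕ) : ℚ) • ψ ρ) := by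
  have hS : (range (l + 1)).filter (fun i => Antitone (Function.update ρ i (ρ i + 1))) =
      addableRows l ρ := rfl
  have hD : ∀ f : ℚ⟦X⟧, derivativeFun f = d⁄dX ℚ f := fun _ => rfl
  simp only [hS, hD]
  have hvanish : ∀ i ∈ addableRows l ρ, 2 ≤ Function.update ρ i (ρ i + 1) 1 →
      ψ (Function.update ρ i (ρ i + 1)) = 0 := fun i hi h2 =>
    hψnonhook _ (mem_filter.1 hi).2 ⟨_, update_add_one_eq_zero_of_max_le hsupp i⟩ h2
  rcases eq_zero_or_two_le_or_eq_hookFun hanti hsupp with rfl | hρ1 | ⟨r, s, hs, rfl⟩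
  · have hψ1 : ψ (hookFun 1 0) = 1 := by simpa using hψhook 1 0 le_rfl
    simp [sum_addableRows_zero, update_zero_eq_hookFun, hψ1]
  · have hzero : ∀ i ∈ addableRows l ρ, ψ (Function.update ρ i (ρ i + 1)) = 0 :=
      fun i hi => hvanish i hi (hρ1.trans (le_update_self_iff.2 (Nat.le_succ _) 1))
    simp +contextual [hzero, hψnonhook ρ hanti ⟨l, hsupp⟩ hρ1]
  · obtain ⟨ha, hb⟩ := hookSeries_relations (fun r s => ψ (hookFun (r + 1) s))
      (fun r s => by simpa [hookSeries] using hψhook (r + 1) s (by omega)) r s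
    iterate 4 rw [sum_addableRows_hookFun hs _ fun i hi h => by simp [hvanish i hi h]]
    rw [update_hookFun_zero, update_hookFun_succ, sum_range_hookFun hs, hookFun_zero,
      hookFun_of_lt s.lt_add_one]
    push_cast
    exact ⟨by linear_combination (norm := module) ha, by linear_combination (norm := module) hb⟩
end
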